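/- Let K be a finite oriented simplicial complex, let ab be an edge of K satisfying the p-link condition, and let K' = γ_{ab}(K). Let 𝒞 be the set of circuits of G = G_{p+1}(K) and 𝒞' the set of circuits of G' = G_{p+1}(K'). Let 𝒞_L ⊆ 𝒞 be the set of circuits of G containing a collapsing p-vertex, and 𝒞_M ⊆ 𝒞 the set of circuits of G containing a pair of (p+1)-vertices that are mirrors of each other. Then there exists a function f: 𝒞 \ (𝒞_M ∪ 𝒞_L) → 𝒞' such that: (P1) f is surjective; (P2) f preserves b-parity; and (P3) for each circuit C in the domain of f, if C has a chord then so does f(C). -/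
import Mathlib


namespace ECpaper

variable {V : Type*} [LinearOrder V]

/-- A finite abstract simplicial complex on a (linearly ordered) vertex type `V`:
a finite collection of nonempty finite subsets of `V` such that every nonempty
subset of a member is a member. -/
structure SC (V : Type*) [LinearOrder V] where
  faces : Finset (Finset V)
  nonempty_of_mem : ∀ σ ∈ faces, σ.Nonempty
  down_closed : ∀ σ ∈ faces, ∀ τ ⊆ σ, τ.Nonempty → τ ∈ faces

/-- The star of a set `X` of simplices: all simplices of `K` having some member
of `X` as a face. -/
def starOf (K : SC V) (X : Set (Finset V)) : Set (Finset V) :=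
  {τ | τ ∈ K.faces ∧ ∃ σ ∈ X, σ ⊆ τ}

/-- The closure of a set `S` of simplices of `K`: all simplices of `S` together
with all of their faces. -/
def closureOf (K : SC V) (S : Set (Finset V)) : Set (Finset V) :=
  {τ | τ ∈ K.faces ∧ ∃ σ ∈ S, τ ⊆ σ}

/-- The link of a set `X` of simplices: the simplices in the closure of the star of `X`
that do not belong to the star of the closure of `X`. -/
def linkOf (K : SC V) (X : Set (Finset V)) : Set (Finset V) :=
  closureOf K (starOf K X) \ starOf K (closureOf K X)

/-- The link of a vertex `a`. -/
def linkV (K : SC V) (a : V) : Set (Finset V) := linkOf K {{a}}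

/-- The link of the edge `ab`. -/
def linkE (K : SC V) (a b : V) : Set (Finset V) := linkOf K {({a, b} : Finset V)}

/-- The link condition for the edge `ab` in `K`: `Lk a ∩ Lk b = Lk ab`. -/
def LinkCond (K : SC V) (a b : V) : Prop :=
  linkV K a ∩ linkV K b = linkE K a b

/-- The `p`-link condition for the edge `ab` in `K`: either `p ≤ 0`, or `p > 0` and every
`(p-1)`-simplex (i.e. simplex of cardinality `p`) of `Lk a ∩ Lk b` lies in `Lk ab`. -/
def PLink (K : SC V) (a b : V) (p : ℤ) : Prop :=
  p ≤ 0 ∨ (0 < p ∧ ∀ ξ ∈ linkV K a ∩ linkV K b, (ξ.card : ℤ) = p → ξ ∈ linkE K a b)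

/-- The dimension of a simplicial complex. -/
def dimSC (K : SC V) : ℤ := ((K.faces.sup Finset.card : ℕ) : ℤ) - 1

/-- The vertex map of the contraction of the edge `ab`: identity everywhere except
that `b` is sent to `a`. -/
def contr (a b : V) : V → V := fun v => if v = b then a else v

/-- The ambient module of simplicial chains (over all dimensions) with `ℤ` coefficients;
the basis element corresponding to a finset is that simplex with its vertices in
increasing order. -/
abbrev FChain (V : Type*) [LinearOrder V] := Finset V →₀ ℤ

/-- The boundary of a single simplex (zero on vertices and on the empty set). -/
noncomputable def bndOf (σ : Finset V) : FChain V :=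
  if σ.card ≤ 1 then 0
  else ∑ v ∈ σ, ((-1 : ℤ) ^ ((σ.filter (fun x => x < v)).card)) •
        Finsupp.single (σ.erase v) (1 : ℤ)

/-- The simplicial boundary operator. -/
noncomputable def bnd : FChain V →ₗ[ℤ] FChain V :=
  Finsupp.lsum ℤ fun σ => LinearMap.toSpanSingleton ℤ (FChain V) (bndOf σ)

/-- The group of `p`-chains of `K`: the span of the `p`-simplices of `K`. -/
noncomputable def chains (K : SC V) (p : ℕ) : Submodule ℤ (FChain V) :=
  Submodule.span ℤ {x : FChain V | ∃ σ ∈ K.faces, σ.card = p + 1 ∧ x = Finsupp.single σ 1}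

/-- The group of `p`-cycles of `K`. -/
noncomputable def cycles (K : SC V) (p : ℕ) : Submodule ℤ (FChain V) :=
  chains K p ⊓ LinearMap.ker bnd

/-- The group of `p`-boundaries of `K`. -/
noncomputable def bdries (K : SC V) (p : ℕ) : Submodule ℤ (FChain V) :=
  (chains K (p + 1)).map bnd

/-- The `p`-th simplicial homology group of `K` with integer coefficients. -/
abbrev Hmlgy (K : SC V) (p : ℕ) : Type _ :=
  ↥(cycles K p) ⧸ ((bdries K p).comap (cycles K p).subtype)

/-- The homology class of a cycle. -/
noncomputable def HmlgyMk (K : SC V) (p : ℕ) (z : FChain V) (hz : z ∈ cycles K p) :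
    Hmlgy K p :=
  Submodule.Quotient.mk ⟨z, hz⟩

/-- The number of inversions in a list. -/
def inversions : List V → ℕ
  | [] => 0
  | x :: xs => (xs.filter (fun y => decide (y < x))).length + inversions xs

/-- Value of the chain map induced by a vertex map `f` on a single simplex: zero if `f` is
not injective on the simplex, and otherwise the image simplex signed by the permutation
rearranging the images of the vertices (in increasing order) into increasing order. -/
noncomputable def cmapOf (f : V → V) (σ : Finset V) : FChain V :=
  if (σ.image f).card = σ.card then
    ((-1 : ℤ) ^ inversions ((σ.sort (· ≤ ·)).map f)) • Finsupp.single (σ.image f) 1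
  else 0

/-- The chain map induced by a vertex map `f`. -/
noncomputable def cmap (f : V → V) : FChain V →ₗ[ℤ] FChain V :=
  Finsupp.lsum ℤ fun σ => LinearMap.toSpanSingleton ℤ (FChain V) (cmapOf f σ)

/-- Relative `p`-cycles of the pair `(L, L0)`: `p`-chains of `L` whose boundary is a
chain of `L0`. -/
noncomputable def relCycles (L L0 : SC V) (p : ℕ) : Submodule ℤ (FChain V) :=
  chains L p ⊓ Submodule.comap bnd (chains L0 (p - 1))

/-- Relative `p`-boundaries of the pair `(L, L0)`: boundaries of `(p+1)`-chains of `L`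
together with `p`-chains of `L0`. -/
noncomputable def relBdries (L L0 : SC V) (p : ℕ) : Submodule ℤ (FChain V) :=
  (chains L (p + 1)).map bnd ⊔ chains L0 p

/-- The `p`-th relative simplicial homology group of the pair `(L, L0)` with
integer coefficients. -/
abbrev RelHmlgy (L L0 : SC V) (p : ℕ) : Type _ :=
  ↥(relCycles L L0 p) ⧸ ((relBdries L L0 p).comap (relCycles L L0 p).subtype)

/-- The relative homology class of a relative cycle. -/
noncomputable def RelHmlgyMk (L L0 : SC V) (p : ℕ) (z : FChain V)
    (hz : z ∈ relCycles L L0 p) : RelHmlgy L L0 p :=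
  Submodule.Quotient.mk ⟨z, hz⟩

/-- A pure simplicial complex of dimension `p`: it is formed by a (nonempty) collection of
`p`-simplices and all their proper faces. -/
def IsPure (L : SC V) (p : ℕ) : Prop :=
  (∀ σ ∈ L.faces, ∃ τ ∈ L.faces, σ ⊆ τ ∧ τ.card = p + 1) ∧ ∃ σ ∈ L.faces, σ.card = p + 1

/-- An orientation of a complex: a choice of sign (`1` if the chosen orientation of the simplex
is the increasing order of the vertices, `-1` if the opposite) for each simplex. -/
def IsOrientation (K : SC V) (o : Finset V → ℤ) : Prop :=
  ∀ σ ∈ K.faces, o σ = 1 ∨ o σ = -1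

/-- Incidence sign (with respect to increasing vertex order) between a codimension-one
face `σ` and a simplex `τ`: `(-1)^i` where `i` is the position in `τ` of the vertex
missing in `σ`. -/
def incSign (σ τ : Finset V) : ℤ :=
  ∏ v ∈ τ \ σ, (-1 : ℤ) ^ ((τ.filter (fun x => x < v)).card)

/-- An edge of the graph `G_q(K)`: a pair of a `(q-1)`-simplex and an incident `q`-simplex. -/
def IsGEdge (K : SC V) (q : ℕ) (e : Finset V × Finset V) : Prop :=
  e.1 ∈ K.faces ∧ e.2 ∈ K.faces ∧ e.1.card = q ∧ e.2.card = q + 1 ∧ e.1 ⊆ e.2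

/-- A circuit of the graph `G_q(K)`: a set of edges of `G_q(K)` in which every vertex of the
graph has even degree. -/
def IsCircuit (K : SC V) (q : ℕ) (C : Finset (Finset V × Finset V)) : Prop :=
  (∀ e ∈ C, IsGEdge K q e) ∧
  ∀ ρ : Finset V,
    Even ((C.filter (fun e => e.1 = ρ)).card + (C.filter (fun e => e.2 = ρ)).card)

/-- Weight of an edge of `G_q(K)` under the orientation `o`. -/
def edgeWeight (o : Finset V → ℤ) (e : Finset V × Finset V) : ℤ :=
  o e.1 * o e.2 * incSign e.1 e.2

/-- Total weight of a circuit under the orientation `o`. -/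
def circWeight (o : Finset V → ℤ) (C : Finset (Finset V × Finset V)) : ℤ :=
  ∑ e ∈ C, edgeWeight o e

/-- A circuit is b-even if the sum of its edge weights is `0 mod 4`. -/
def BEven (o : Finset V → ℤ) (C : Finset (Finset V × Finset V)) : Prop :=
  circWeight o C % 4 = 0

/-- A circuit is b-odd if the sum of its edge weights is `2 mod 4`. -/
def BOdd (o : Finset V → ℤ) (C : Finset (Finset V × Finset V)) : Prop :=
  circWeight o C % 4 = 2

/-- A circuit `C` of `G_q(K)` has a chord: an edge of the graph not in `C` both of whose
endpoints are vertices of `C`. -/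
def HasChord (K : SC V) (q : ℕ) (C : Finset (Finset V × Finset V)) : Prop :=
  ∃ e : Finset V × Finset V, IsGEdge K q e ∧ e ∉ C ∧
    (∃ c ∈ C, c.1 = e.1) ∧ (∃ c ∈ C, c.2 = e.2)

/-- The boundary matrix `[∂_{p+1}]` of an oriented complex: rows indexed by `p`-simplices,
columns by `(p+1)`-simplices, entries the signed incidence numbers. -/
def boundaryMatrixSucc (K : SC V) (o : Finset V → ℤ) (p : ℕ) :
    Matrix {σ : Finset V // σ ∈ K.faces ∧ σ.card = p + 1}
      {τ : Finset V // τ ∈ K.faces ∧ τ.card = p + 2} ℤ :=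
  fun σ τ => if σ.1 ⊆ τ.1 then edgeWeight o (σ.1, τ.1) else 0

/-- `σ` is a collapsing simplex (w.r.t. contraction of `ab`). -/
def IsCollapsing (a b : V) (σ : Finset V) : Prop := a ∈ σ ∧ b ∈ σ

/-- `σ` and `σ'` are mirror simplices (w.r.t. contraction of `ab`). -/
def IsMirror (a b : V) (σ σ' : Finset V) : Prop :=
  a ∈ σ ∧ b ∈ σ' ∧ σ = insert a (σ'.erase b)

/-- The circuit `C` of `G_{p+1}(K)` contains (an edge incident to) a collapsing `p`-vertex. -/
def ContainsCollapsingLow (a b : V) (C : Finset (Finset V × Finset V)) : Prop :=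
  ∃ e ∈ C, IsCollapsing a b e.1

/-- The circuit `C` of `G_{p+1}(K)` contains a pair of `(p+1)`-vertices that are mirrors of
each other. -/
def ContainsMirrorHigh (a b : V) (C : Finset (Finset V × Finset V)) : Prop :=
  ∃ e ∈ C, ∃ e' ∈ C, IsMirror a b e.2 e'.2



/-! ### Auxiliary lemmas for Statement 14 -/

section Aux14

variable {a b v : V}

lemma contr_b (a b : V) : contr a b b = a := by simp [contr]

lemma contr_ne (a : V) {b v : V} (h : v ≠ b) : contr a b v = v := by simp [contr, h]

lemma image_contr_of_not_mem {ρ : Finset V} (h : b ∉ ρ) :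
    ρ.image (contr a b) = ρ := by
  rw [Finset.image_congr (g := id), Finset.image_id]
  intro x hx
  exact contr_ne a (by rintro rfl; exact h hx)

lemma image_contr_of_mem {ρ : Finset V} (h : b ∈ ρ) :
    ρ.image (contr a b) = insert a (ρ.erase b) := by
  nth_rewrite 1 [← Finset.insert_erase h]
  rw [Finset.image_insert, contr_b, image_contr_of_not_mem (Finset.notMem_erase b ρ)]

lemma not_mem_image_contr (hne : a ≠ b) (ρ : Finset V) :
    b ∉ ρ.image (contr a b) := by
  intro h
  obtain ⟨x, hx, hcx⟩ := Finset.mem_image.mp h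
  by_cases hxb : x = b
  · subst hxb; rw [contr_b] at hcx; exact hne hcx
  · rw [contr_ne a hxb] at hcx; exact hxb hcx

lemma card_image_contr (hne : a ≠ b) {ρ : Finset V} (h : ¬(a ∈ ρ ∧ b ∈ ρ)) :
    (ρ.image (contr a b)).card = ρ.card := by
  by_cases hb : b ∈ ρ
  · have ha : a ∉ ρ := fun ha => h ⟨ha, hb⟩
    rw [image_contr_of_mem hb,
      Finset.card_insert_of_notMem (fun hm => ha (Finset.mem_of_mem_erase hm)),
      Finset.card_erase_of_mem hb]
    have := Finset.card_pos.mpr ⟨b, hb⟩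
    omega
  · rw [image_contr_of_not_mem hb]

lemma preimage_cases (hne : a ≠ b) {ρ X : Finset V} (hnc : ¬(a ∈ ρ ∧ b ∈ ρ))
    (hX : ρ.image (contr a b) = X) :
    (b ∉ ρ ∧ ρ = X) ∨ (b ∈ ρ ∧ a ∉ ρ ∧ a ∈ X ∧ b ∉ X ∧ ρ = insert b (X.erase a)) := by
  by_cases hb : b ∈ ρ
  · right
    have ha : a ∉ ρ := fun h => hnc ⟨h, hb⟩
    rw [image_contr_of_mem hb] at hX
    have haX : a ∈ X := hX ▸ Finset.mem_insert_self a _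
    have hbX : b ∉ X := by
      rw [← hX]
      intro hm
      rcases Finset.mem_insert.mp hm with h1 | h1
      · exact hne h1.symm
      · exact Finset.notMem_erase b ρ h1
    refine ⟨hb, ha, haX, hbX, ?_⟩
    have h1 : X.erase a = ρ.erase b := by
      rw [← hX, Finset.erase_insert (fun hm => ha (Finset.mem_of_mem_erase hm))]
    rw [h1, Finset.insert_erase hb]
  · left; exact ⟨hb, by rw [← hX, image_contr_of_not_mem hb]⟩

lemma cofacet {σ τ : Finset V} (hsub : σ ⊆ τ) (hcard : τ.card = σ.card + 1) :
    ∃ x, x ∈ τ ∧ x ∉ σ ∧ σ = τ.erase x ∧ τ \ σ = {x} := by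
  have h1 : (τ \ σ).card = 1 := by rw [Finset.card_sdiff_of_subset hsub]; omega
  obtain ⟨x, hx⟩ := Finset.card_eq_one.mp h1
  have hxm : x ∈ τ \ σ := hx ▸ Finset.mem_singleton_self x
  have hxτ : x ∈ τ := (Finset.mem_sdiff.mp hxm).1
  have hxσ : x ∉ σ := (Finset.mem_sdiff.mp hxm).2
  refine ⟨x, hxτ, hxσ, ?_, hx⟩
  ext z
  simp only [Finset.mem_erase]
  constructor
  · intro hz
    exact ⟨fun he => hxσ (he ▸ hz), hsub hz⟩
  · rintro ⟨hzx, hzτ⟩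
    by_contra hzσ
    have : z ∈ τ \ σ := Finset.mem_sdiff.mpr ⟨hzτ, hzσ⟩
    rw [hx, Finset.mem_singleton] at this
    exact hzx this

lemma incSign_eq {σ τ : Finset V} {x : V} (h : τ \ σ = {x}) :
    incSign σ τ = (-1 : ℤ) ^ ((τ.filter (fun z => z < x)).card) := by
  unfold incSign
  rw [h, Finset.prod_singleton]

lemma npow_eq {m n : ℕ} (h : m % 2 = n % 2) : (-1 : ℤ) ^ m = (-1 : ℤ) ^ n := by
  rcases Nat.even_or_odd m with hm | hm
  · have hn : Even n := by rw [Nat.even_iff] at *; omega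
    rw [hm.neg_one_pow, hn.neg_one_pow]
  · have hn : Odd n := by rw [Nat.odd_iff] at *; omega
    rw [hm.neg_one_pow, hn.neg_one_pow]

lemma pos_split {x y : V} (h : x < y) (t : Finset V) :
    (t.filter (fun z => z < y)).card
      = (t.filter (fun z => z < x)).card + (if x ∈ t then 1 else 0)
        + (t.filter (fun z => x < z ∧ z < y)).card := by
  have e1 : t.filter (fun z => z < y)
      = ((t.filter (fun z => z < x)) ∪ (t.filter (fun z => z = x)))
        ∪ (t.filter (fun z => x < z ∧ z < y)) := by
    ext z
    simp only [Finset.mem_filter, Finset.mem_union]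
    constructor
    · rintro ⟨hz, hzy⟩
      rcases lt_trichotomy z x with h' | h' | h'
      · exact Or.inl (Or.inl ⟨hz, h'⟩)
      · exact Or.inl (Or.inr ⟨hz, h'⟩)
      · exact Or.inr ⟨hz, h', hzy⟩
    · rintro ((⟨hz, h'⟩ | ⟨hz, h'⟩) | ⟨hz, h1, h2⟩)
      · exact ⟨hz, h'.trans h⟩
      · exact ⟨hz, h' ▸ h⟩
      · exact ⟨hz, h2⟩
  have d1 : Disjoint (t.filter (fun z => z < x)) (t.filter (fun z => z = x)) := by
    rw [Finset.disjoint_left]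
    intro z hz1 hz2
    have h1 := (Finset.mem_filter.mp hz1).2
    have h2 := (Finset.mem_filter.mp hz2).2
    exact absurd (h2 ▸ h1) (lt_irrefl x)
  have d2 : Disjoint ((t.filter (fun z => z < x)) ∪ (t.filter (fun z => z = x)))
      (t.filter (fun z => x < z ∧ z < y)) := by
    rw [Finset.disjoint_left]
    intro z hz1 hz2
    have h2 := (Finset.mem_filter.mp hz2).2
    rcases Finset.mem_union.mp hz1 with h1 | h1
    · exact absurd ((Finset.mem_filter.mp h1).2.trans h2.1) (lt_irrefl z)
    · exact absurd ((Finset.mem_filter.mp h1).2 ▸ h2.1) (lt_irrefl x)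
  rw [e1, Finset.card_union_of_disjoint d2, Finset.card_union_of_disjoint d1,
    Finset.filter_eq']
  split <;> simp

/-- The sign of the permutation reordering the vertices after the contraction. -/
def sgn (a b : V) (ρ : Finset V) : ℤ :=
  if b ∈ ρ then (-1 : ℤ) ^ ((ρ.filter (fun z => min a b < z ∧ z < max a b)).card) else 1

lemma sgn_pm (a b : V) (ρ : Finset V) : sgn a b ρ = 1 ∨ sgn a b ρ = -1 := by
  unfold sgn
  split
  · rcases Nat.even_or_odd ((ρ.filter (fun z => min a b < z ∧ z < max a b)).card) with h | h
    · exact Or.inl h.neg_one_pow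
    · exact Or.inr h.neg_one_pow
  · exact Or.inl rfl

lemma sgn_of_not_mem {ρ : Finset V} (h : b ∉ ρ) : sgn a b ρ = 1 := if_neg h

lemma pos_insert_erase (hne : a ≠ b) {τ : Finset V} (ha : a ∉ τ) (hb : b ∈ τ) (v : V) :
    ((insert a (τ.erase b)).filter (fun z => z < v)).card + (if b < v then 1 else 0)
      = (τ.filter (fun z => z < v)).card + (if a < v then 1 else 0) := by
  have hbf : ∀ (hbv : b < v), b ∈ τ.filter (fun z => z < v) :=
    fun hbv => Finset.mem_filter.mpr ⟨hb, hbv⟩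
  rw [Finset.filter_insert, Finset.filter_erase]
  by_cases hav : a < v
  · rw [if_pos hav, if_pos hav, Finset.card_insert_of_notMem
      (fun hm => ha (Finset.mem_filter.mp (Finset.mem_of_mem_erase hm)).1)]
    by_cases hbv : b < v
    · rw [if_pos hbv, Finset.card_erase_of_mem (hbf hbv)]
      have : 0 < (τ.filter (fun z => z < v)).card := Finset.card_pos.mpr ⟨b, hbf hbv⟩
      omega
    · have hnm : b ∉ τ.filter (fun z => z < v) := fun h => hbv (Finset.mem_filter.mp h).2
      rw [if_neg hbv, Finset.erase_eq_of_notMem hnm]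
  · rw [if_neg hav, if_neg hav]
    by_cases hbv : b < v
    · rw [if_pos hbv, Finset.card_erase_of_mem (hbf hbv)]
      have : 0 < (τ.filter (fun z => z < v)).card := Finset.card_pos.mpr ⟨b, hbf hbv⟩
      omega
    · have hnm : b ∉ τ.filter (fun z => z < v) := fun h => hbv (Finset.mem_filter.mp h).2
      rw [if_neg hbv, Finset.erase_eq_of_notMem hnm]


lemma sgn_S1 (hne : a ≠ b) {σ τ : Finset V} (hnc : ¬(a ∈ τ ∧ b ∈ τ))
    (hsub : σ ⊆ τ) (hcard : τ.card = σ.card + 1) :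
    incSign (σ.image (contr a b)) (τ.image (contr a b))
      = sgn a b σ * sgn a b τ * incSign σ τ := by
  obtain ⟨v, hvτ, hvσ, hσe, hsd⟩ := cofacet hsub hcard
  by_cases hbτ : b ∈ τ
  swap
  · have hbσ : b ∉ σ := fun h => hbτ (hsub h)
    rw [image_contr_of_not_mem hbτ, image_contr_of_not_mem hbσ,
      sgn_of_not_mem hbσ, sgn_of_not_mem hbτ]
    ring
  have haτ : a ∉ τ := fun h => hnc ⟨h, hbτ⟩
  by_cases hvb : v = b
  · subst hvb
    -- here σ = τ.erase v, the removed vertex is b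
    have haσ : a ∉ σ := fun h => haτ (hsub h)
    have hsd' : insert a (τ.erase v) \ σ = {a} := by
      rw [← hσe]
      ext z
      simp only [Finset.mem_sdiff, Finset.mem_insert, Finset.mem_singleton]
      constructor
      · rintro ⟨h1 | h1, h2⟩
        · exact h1
        · exact absurd h1 h2
      · rintro rfl
        exact ⟨Or.inl rfl, haσ⟩
    rw [image_contr_of_not_mem hvσ, image_contr_of_mem hbτ, incSign_eq hsd',
      incSign_eq hsd, sgn_of_not_mem hvσ]
    simp only [sgn, if_pos hbτ]
    have E1 := pos_insert_erase hne haτ hbτ a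
    rw [if_neg (lt_irrefl a)] at E1
    rcases hne.lt_or_gt with hab | hab
    · have E2 := pos_split hab τ
      rw [if_neg haτ] at E2
      simp only [min_eq_left hab.le, max_eq_right hab.le]
      rw [if_neg (asymm hab)] at E1
      rw [one_mul, ← pow_add]
      exact npow_eq (by omega)
    · have E2 := pos_split hab τ
      rw [if_pos hbτ] at E2
      simp only [min_eq_right hab.le, max_eq_left hab.le]
      rw [if_pos hab] at E1
      rw [one_mul, ← pow_add]
      exact npow_eq (by omega)
  · -- the removed vertex v is not b, hence b ∈ σ
    have hbσ : b ∈ σ := by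
      rw [hσe]
      exact Finset.mem_erase.mpr ⟨fun h => hvb h.symm, hbτ⟩
    have hva : v ≠ a := fun h => haτ (h ▸ hvτ)
    have hsd' : insert a (τ.erase b) \ insert a (σ.erase b) = {v} := by
      ext z
      simp only [Finset.mem_sdiff, Finset.mem_insert, Finset.mem_erase,
        Finset.mem_singleton, not_or, not_and]
      constructor
      · rintro ⟨h1, h2, h3⟩
        rcases h1 with rfl | ⟨hzb, hzτ⟩
        · exact absurd rfl h2
        · have hzσ : z ∉ σ := h3 hzb
          have hm : z ∈ τ \ σ := Finset.mem_sdiff.mpr ⟨hzτ, hzσ⟩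
          rw [hsd, Finset.mem_singleton] at hm
          exact hm
      · rintro rfl
        exact ⟨Or.inr ⟨hvb, hvτ⟩, hva, fun _ => hvσ⟩
    rw [image_contr_of_mem hbσ, image_contr_of_mem hbτ, incSign_eq hsd',
      incSign_eq hsd]
    simp only [sgn, if_pos hbτ, if_pos hbσ]
    have E1 := pos_insert_erase hne haτ hbτ v
    rcases hne.lt_or_gt with hab | hab
    · simp only [min_eq_left hab.le, max_eq_right hab.le]
      have hfe : σ.filter (fun z => a < z ∧ z < b)
          = (τ.filter (fun z => a < z ∧ z < b)).erase v := by
        rw [hσe, Finset.filter_erase]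
      by_cases hav : a < v
      · by_cases hbv : b < v
        · have hnm : v ∉ τ.filter (fun z => a < z ∧ z < b) :=
            fun h => (lt_asymm hbv) (Finset.mem_filter.mp h).2.2
          have hk := hfe.symm ▸ Finset.erase_eq_of_notMem hnm
          have hk' : (σ.filter (fun z => a < z ∧ z < b)).card
              = (τ.filter (fun z => a < z ∧ z < b)).card := by rw [hfe, Finset.erase_eq_of_notMem hnm]
          rw [if_pos hav, if_pos hbv] at E1
          rw [← pow_add, ← pow_add]
          exact npow_eq (by omega)
        · have hvltb : v < b := lt_of_le_of_ne (not_lt.mp hbv) hvb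
          have hm : v ∈ τ.filter (fun z => a < z ∧ z < b) :=
            Finset.mem_filter.mpr ⟨hvτ, hav, hvltb⟩
          have hpos : 0 < (τ.filter (fun z => a < z ∧ z < b)).card :=
            Finset.card_pos.mpr ⟨v, hm⟩
          have hk' : (σ.filter (fun z => a < z ∧ z < b)).card + 1
              = (τ.filter (fun z => a < z ∧ z < b)).card := by
            rw [hfe, Finset.card_erase_of_mem hm]; omega
          rw [if_pos hav, if_neg hbv] at E1
          rw [← pow_add, ← pow_add]
          exact npow_eq (by omega)
      · have hbv : ¬ b < v := fun h => hav (hab.trans h)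
        have hnm : v ∉ τ.filter (fun z => a < z ∧ z < b) :=
          fun h => hav (Finset.mem_filter.mp h).2.1
        have hk' : (σ.filter (fun z => a < z ∧ z < b)).card
            = (τ.filter (fun z => a < z ∧ z < b)).card := by
          rw [hfe, Finset.erase_eq_of_notMem hnm]
        rw [if_neg hav, if_neg hbv] at E1
        rw [← pow_add, ← pow_add]
        exact npow_eq (by omega)
    · simp only [min_eq_right hab.le, max_eq_left hab.le]
      have hfe : σ.filter (fun z => b < z ∧ z < a)
          = (τ.filter (fun z => b < z ∧ z < a)).erase v := by
        rw [hσe, Finset.filter_erase]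
      by_cases hbv : b < v
      · by_cases hav : a < v
        · have hnm : v ∉ τ.filter (fun z => b < z ∧ z < a) :=
            fun h => (lt_asymm hav) (Finset.mem_filter.mp h).2.2
          have hk' : (σ.filter (fun z => b < z ∧ z < a)).card
              = (τ.filter (fun z => b < z ∧ z < a)).card := by
            rw [hfe, Finset.erase_eq_of_notMem hnm]
          rw [if_pos hav, if_pos hbv] at E1
          rw [← pow_add, ← pow_add]
          exact npow_eq (by omega)
        · have hvlta : v < a := lt_of_le_of_ne (not_lt.mp hav) hva
          have hm : v ∈ τ.filter (fun z => b < z ∧ z < a) :=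
            Finset.mem_filter.mpr ⟨hvτ, hbv, hvlta⟩
          have hpos : 0 < (τ.filter (fun z => b < z ∧ z < a)).card :=
            Finset.card_pos.mpr ⟨v, hm⟩
          have hk' : (σ.filter (fun z => b < z ∧ z < a)).card + 1
              = (τ.filter (fun z => b < z ∧ z < a)).card := by
            rw [hfe, Finset.card_erase_of_mem hm]; omega
          rw [if_neg hav, if_pos hbv] at E1
          rw [← pow_add, ← pow_add]
          exact npow_eq (by omega)
      · have hav : ¬ a < v := fun h => hbv (hab.trans h)
        have hnm : v ∉ τ.filter (fun z => b < z ∧ z < a) :=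
          fun h => hbv (Finset.mem_filter.mp h).2.1
        have hk' : (σ.filter (fun z => b < z ∧ z < a)).card
            = (τ.filter (fun z => b < z ∧ z < a)).card := by
          rw [hfe, Finset.erase_eq_of_notMem hnm]
        rw [if_neg hav, if_neg hbv] at E1
        rw [← pow_add, ← pow_add]
        exact npow_eq (by omega)

lemma sdiff_erase_self {τ : Finset V} (h : v ∈ τ) : τ \ τ.erase v = {v} := by
  ext z
  simp only [Finset.mem_sdiff, Finset.mem_erase, Finset.mem_singleton, not_and]
  constructor
  · rintro ⟨h1, h2⟩
    by_contra hz
    exact h2 hz h1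
  · rintro rfl
    exact ⟨h, fun hz _ => absurd rfl hz⟩

lemma sgn_S2 (hne : a ≠ b) {τ : Finset V} (ha : a ∈ τ) (hb : b ∈ τ) :
    sgn a b (τ.erase b) * incSign (τ.erase b) τ
      * (sgn a b (τ.erase a) * incSign (τ.erase a) τ) = -1 := by
  have hba : b ∈ τ.erase a := Finset.mem_erase.mpr ⟨hne.symm, hb⟩
  rw [sgn_of_not_mem (Finset.notMem_erase b τ), incSign_eq (sdiff_erase_self hb),
    incSign_eq (sdiff_erase_self ha)]
  simp only [sgn, if_pos hba]
  have hfe : (τ.erase a).filter (fun z => min a b < z ∧ z < max a b)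
      = (τ.filter (fun z => min a b < z ∧ z < max a b)).erase a := by
    rw [Finset.filter_erase]
  have hanm : a ∉ τ.filter (fun z => min a b < z ∧ z < max a b) := by
    intro h
    have h2 := (Finset.mem_filter.mp h).2
    rcases hne.lt_or_gt with hab | hab
    · rw [min_eq_left hab.le] at h2
      exact lt_irrefl a h2.1
    · rw [max_eq_left hab.le] at h2
      exact lt_irrefl a h2.2
  have hk : ((τ.erase a).filter (fun z => min a b < z ∧ z < max a b)).card
      = (τ.filter (fun z => min a b < z ∧ z < max a b)).card := by
    rw [hfe, Finset.erase_eq_of_notMem hanm]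
  rcases hne.lt_or_gt with hab | hab
  · have E2 := pos_split hab τ
    rw [if_pos ha] at E2
    rw [hk]
    simp only [min_eq_left hab.le, max_eq_right hab.le] at *
    rw [one_mul, ← mul_assoc, ← pow_add, ← pow_add]
    exact Odd.neg_one_pow (by rw [Nat.odd_iff]; omega)
  · have E2 := pos_split hab τ
    rw [if_pos hb] at E2
    rw [hk]
    simp only [min_eq_right hab.le, max_eq_left hab.le] at *
    rw [one_mul, ← mul_assoc, ← pow_add, ← pow_add]
    exact Odd.neg_one_pow (by rw [Nat.odd_iff]; omega)


lemma even_sum_nat {α : Type*} (s : Finset α) (f : α → ℕ) (h : ∀ x ∈ s, Even (f x)) :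
    Even (∑ x ∈ s, f x) := by
  induction s using Finset.cons_induction with
  | empty => simp
  | cons x s hx ih =>
    rw [Finset.sum_cons]
    exact (h x (Finset.mem_cons_self x s)).add
      (ih fun y hy => h y (Finset.mem_cons_of_mem hy))

lemma prod_pm {α : Type*} [DecidableEq α] (s : Finset α) (f : α → ℤ)
    (h : ∀ x ∈ s, f x = 1 ∨ f x = -1) :
    ∏ x ∈ s, f x = (-1 : ℤ) ^ ((s.filter (fun x => f x = -1)).card) := by
  induction s using Finset.induction_on with
  | empty => simp
  | @insert x s hx ih =>
    have hx' := h x (Finset.mem_insert_self x s)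
    have ih' := ih (fun y hy => h y (Finset.mem_insert_of_mem hy))
    rw [Finset.prod_insert hx, Finset.filter_insert, ih']
    rcases hx' with h1 | h1
    · rw [if_neg (by rw [h1]; norm_num), h1, one_mul]
    · rw [if_pos h1, h1, Finset.card_insert_of_notMem
        (fun hm => hx (Finset.mem_of_mem_filter x hm)), pow_succ]
      ring

lemma sum_pm {α : Type*} [DecidableEq α] (s : Finset α) (f : α → ℤ)
    (h : ∀ x ∈ s, f x = 1 ∨ f x = -1) :
    ∑ x ∈ s, f x = (s.card : ℤ) - 2 * ((s.filter (fun x => f x = -1)).card : ℤ) := by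
  induction s using Finset.induction_on with
  | empty => simp
  | @insert x s hx ih =>
    have hx' := h x (Finset.mem_insert_self x s)
    have ih' := ih (fun y hy => h y (Finset.mem_insert_of_mem hy))
    rw [Finset.sum_insert hx, Finset.filter_insert, ih',
      Finset.card_insert_of_notMem hx]
    rcases hx' with h1 | h1
    · rw [if_neg (by rw [h1]; norm_num), h1]
      push_cast
      ring
    · rw [if_pos h1, h1, Finset.card_insert_of_notMem
        (fun hm => hx (Finset.mem_of_mem_filter x hm))]
      push_cast
      ring

lemma even_deg1 {K : SC V} {q : ℕ} {C : Finset (Finset V × Finset V)}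
    (hC : IsCircuit K q C) (ρ : Finset V) :
    Even ((C.filter (fun e => e.1 = ρ)).card) := by
  rcases eq_or_ne ρ.card (q + 1) with h | h
  · have h0 : C.filter (fun e => e.1 = ρ) = ∅ := by
      rw [Finset.filter_eq_empty_iff]
      intro e he heq
      have hc := (hC.1 e he).2.2.1
      rw [heq, h] at hc
      omega
    rw [h0]
    simp
  · have h0 : C.filter (fun e => e.2 = ρ) = ∅ := by
      rw [Finset.filter_eq_empty_iff]
      intro e he heq
      have hc := (hC.1 e he).2.2.2.1
      rw [heq] at hc
      exact h hc
    have h2 := hC.2 ρ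
    rw [h0] at h2
    simpa using h2

lemma even_deg2 {K : SC V} {q : ℕ} {C : Finset (Finset V × Finset V)}
    (hC : IsCircuit K q C) (ρ : Finset V) :
    Even ((C.filter (fun e => e.2 = ρ)).card) := by
  rcases eq_or_ne ρ.card (q + 1) with h | h
  · have h0 : C.filter (fun e => e.1 = ρ) = ∅ := by
      rw [Finset.filter_eq_empty_iff]
      intro e he heq
      have hc := (hC.1 e he).2.2.1
      rw [heq, h] at hc
      omega
    have h2 := hC.2 ρ
    rw [h0] at h2
    simpa using h2
  · have h0 : C.filter (fun e => e.2 = ρ) = ∅ := by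
      rw [Finset.filter_eq_empty_iff]
      intro e he heq
      have hc := (hC.1 e he).2.2.2.1
      rw [heq] at hc
      exact h hc
    rw [h0]
    simp

lemma face_of_coll {σ τ : Finset V} (hsub : σ ⊆ τ) (hcard : τ.card = σ.card + 1)
    (haτ : a ∈ τ) (hbτ : b ∈ τ) (hσ : ¬(a ∈ σ ∧ b ∈ σ)) :
    σ = τ.erase a ∨ σ = τ.erase b := by
  obtain ⟨x, hxτ, hxσ, hσe, -⟩ := cofacet hsub hcard
  by_cases hxa : x = a
  · left; rw [hσe, hxa]
  · by_cases hxb : x = b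
    · right; rw [hσe, hxb]
    · exfalso
      apply hσ
      rw [hσe]
      exact ⟨Finset.mem_erase.mpr ⟨fun h => hxa h.symm, haτ⟩,
        Finset.mem_erase.mpr ⟨fun h => hxb h.symm, hbτ⟩⟩

lemma same_image_cases (hne : a ≠ b) {ρ₁ ρ₂ : Finset V}
    (h1 : ¬(a ∈ ρ₁ ∧ b ∈ ρ₁)) (h2 : ¬(a ∈ ρ₂ ∧ b ∈ ρ₂))
    (him : ρ₁.image (contr a b) = ρ₂.image (contr a b)) :
    ρ₁ = ρ₂ ∨ IsMirror a b ρ₁ ρ₂ ∨ IsMirror a b ρ₂ ρ₁ := by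
  rcases preimage_cases hne h1 (rfl : ρ₁.image (contr a b) = _) with
    ⟨hb1, he1⟩ | ⟨hb1, ha1, haX1, hbX1, he1⟩ <;>
  rcases preimage_cases hne h2 (him.symm : ρ₂.image (contr a b) = _) with
    ⟨hb2, he2⟩ | ⟨hb2, ha2, haX2, hbX2, he2⟩
  · exact Or.inl (he1.trans he2.symm)
  · refine Or.inr (Or.inl ⟨?_, ?_, ?_⟩)
    · rw [he1]; exact haX2
    · rw [he2]; exact Finset.mem_insert_self b _
    · rw [he1, he2, Finset.erase_insert (fun hm => hbX2 (Finset.mem_of_mem_erase hm)),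
        Finset.insert_erase haX2]
  · refine Or.inr (Or.inr ⟨?_, ?_, ?_⟩)
    · rw [he2]; exact haX1
    · rw [he1]; exact Finset.mem_insert_self b _
    · rw [he1, he2, Finset.erase_insert (fun hm => hbX1 (Finset.mem_of_mem_erase hm)),
        Finset.insert_erase haX1]
  · exact Or.inl (he1.trans he2.symm)

lemma pairT (hne : a ≠ b) {K : SC V} {q : ℕ} {C : Finset (Finset V × Finset V)}
    (hC : IsCircuit K q C) (hL : ¬ContainsCollapsingLow a b C)
    {τ : Finset V} (haτ : a ∈ τ) (hbτ : b ∈ τ) (hmem : ∃ e ∈ C, e.2 = τ) :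
    C.filter (fun e => e.2 = τ) = {(τ.erase a, τ), (τ.erase b, τ)} := by
  have hsubs : C.filter (fun e => e.2 = τ) ⊆ {(τ.erase a, τ), (τ.erase b, τ)} := by
    intro e he
    obtain ⟨heC, heq⟩ := Finset.mem_filter.mp he
    have hedge := hC.1 e heC
    have hnc1 : ¬(a ∈ e.1 ∧ b ∈ e.1) := fun h => hL ⟨e, heC, h⟩
    have hcc : τ.card = e.1.card + 1 := by
      rw [← heq, hedge.2.2.2.1, hedge.2.2.1]
    have hface := face_of_coll (heq ▸ hedge.2.2.2.2) hcc haτ hbτ hnc1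
    rcases hface with hf | hf
    · exact Finset.mem_insert.mpr (Or.inl (Prod.ext hf heq))
    · exact Finset.mem_insert.mpr (Or.inr (Finset.mem_singleton.mpr (Prod.ext hf heq)))
  have hb' : b ∈ τ.erase a := Finset.mem_erase.mpr ⟨hne.symm, hbτ⟩
  have hcard2 : ({(τ.erase a, τ), (τ.erase b, τ)} : Finset (Finset V × Finset V)).card = 2 := by
    rw [Finset.card_insert_of_notMem, Finset.card_singleton]
    simp only [Finset.mem_singleton]
    intro h
    have h1 := congrArg Prod.fst h
    simp only at h1
    rw [h1] at hb'
    exact Finset.notMem_erase b τ hb'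
  have heven := even_deg2 hC τ
  obtain ⟨e, heC, heq⟩ := hmem
  have hpos : 0 < (C.filter (fun e => e.2 = τ)).card :=
    Finset.card_pos.mpr ⟨e, Finset.mem_filter.mpr ⟨heC, heq⟩⟩
  have hle : 2 ≤ (C.filter (fun e => e.2 = τ)).card := by
    rw [Nat.even_iff] at heven
    omega
  exact Finset.eq_of_subset_of_card_le hsubs (by rw [hcard2]; exact hle)


/-- The underlying edge map of the contraction. -/
def emap (a b : V) (e : Finset V × Finset V) : Finset V × Finset V :=
  (e.1.image (contr a b), e.2.image (contr a b))

/-- The forward map on circuits: drop the edges with collapsing top simplex and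
push the rest forward. -/
def fwd (a b : V) (C : Finset (Finset V × Finset V)) : Finset (Finset V × Finset V) :=
  (C.filter (fun e => ¬(a ∈ e.2 ∧ b ∈ e.2))).image (emap a b)

lemma emap_injOn (hne : a ≠ b) {K : SC V} {q : ℕ} {C : Finset (Finset V × Finset V)}
    (hC : IsCircuit K q C) (hM : ¬ContainsMirrorHigh a b C)
    (hL : ¬ContainsCollapsingLow a b C) :
    ∀ e ∈ C.filter (fun e => ¬(a ∈ e.2 ∧ b ∈ e.2)),
      ∀ d ∈ C.filter (fun e => ¬(a ∈ e.2 ∧ b ∈ e.2)),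
        emap a b e = emap a b d → e = d := by
  intro e he d hd heq
  obtain ⟨heC, henc⟩ := Finset.mem_filter.mp he
  obtain ⟨hdC, hdnc⟩ := Finset.mem_filter.mp hd
  have heq1 : e.1.image (contr a b) = d.1.image (contr a b) := congrArg Prod.fst heq
  have heq2 : e.2.image (contr a b) = d.2.image (contr a b) := congrArg Prod.snd heq
  have h2 : e.2 = d.2 := by
    rcases same_image_cases hne henc hdnc heq2 with h | h | h
    · exact h
    · exact absurd ⟨e, heC, d, hdC, h⟩ hM
    · exact absurd ⟨d, hdC, e, heC, h⟩ hM
  have hnc1e : ¬(a ∈ e.1 ∧ b ∈ e.1) := fun h => hL ⟨e, heC, h⟩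
  have hnc1d : ¬(a ∈ d.1 ∧ b ∈ d.1) := fun h => hL ⟨d, hdC, h⟩
  have h1 : e.1 = d.1 := by
    rcases same_image_cases hne hnc1e hnc1d heq1 with h | h | h
    · exact h
    · refine absurd ⟨(hC.1 e heC).2.2.2.2 h.1, ?_⟩ henc
      rw [h2]
      exact (hC.1 d hdC).2.2.2.2 h.2.1
    · refine absurd ⟨?_, (hC.1 e heC).2.2.2.2 h.2.1⟩ henc
      rw [h2]
      exact (hC.1 d hdC).2.2.2.2 h.1
  exact Prod.ext h1 h2

lemma fwd_isCircuit (hne : a ≠ b) {K K' : SC V} {p : ℕ} {C : Finset (Finset V × Finset V)}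
    (hK' : K'.faces = K.faces.image (Finset.image (contr a b)))
    (hC : IsCircuit K (p + 1) C) (hM : ¬ContainsMirrorHigh a b C)
    (hL : ¬ContainsCollapsingLow a b C) :
    IsCircuit K' (p + 1) (fwd a b C) := by
  have hinj := emap_injOn hne hC hM hL
  constructor
  · intro x hx
    obtain ⟨e, he, rfl⟩ := Finset.mem_image.mp hx
    obtain ⟨heC, henc⟩ := Finset.mem_filter.mp he
    have hedge := hC.1 e heC
    have hnc1 : ¬(a ∈ e.1 ∧ b ∈ e.1) := fun h => hL ⟨e, heC, h⟩
    refine ⟨?_, ?_, ?_, ?_, ?_⟩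
    · rw [hK']; exact Finset.mem_image_of_mem _ hedge.1
    · rw [hK']; exact Finset.mem_image_of_mem _ hedge.2.1
    · show (e.1.image (contr a b)).card = p + 1
      rw [card_image_contr hne hnc1]; exact hedge.2.2.1
    · show (e.2.image (contr a b)).card = p + 1 + 1
      rw [card_image_contr hne henc]; exact hedge.2.2.2.1
    · exact Finset.image_subset_image hedge.2.2.2.2
  · intro ρ
    have hd2 : ((fwd a b C).filter (fun e => e.2 = ρ)).card
        = ((C.filter (fun e => ¬(a ∈ e.2 ∧ b ∈ e.2))).filter
            (fun e => e.2.image (contr a b) = ρ)).card := by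
      rw [fwd, Finset.filter_image]
      refine Finset.card_image_of_injOn ?_
      intro e he' d hd' heq
      exact hinj e (Finset.mem_of_mem_filter e he') d (Finset.mem_of_mem_filter d hd') heq
    have hd1 : ((fwd a b C).filter (fun e => e.1 = ρ)).card
        = ((C.filter (fun e => ¬(a ∈ e.2 ∧ b ∈ e.2))).filter
            (fun e => e.1.image (contr a b) = ρ)).card := by
      rw [fwd, Finset.filter_image]
      refine Finset.card_image_of_injOn ?_
      intro e he' d hd' heq
      exact hinj e (Finset.mem_of_mem_filter e he') d (Finset.mem_of_mem_filter d hd') heq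
    have hd2e : Even (((C.filter (fun e => ¬(a ∈ e.2 ∧ b ∈ e.2))).filter
        (fun e => e.2.image (contr a b) = ρ)).card) := by
      have hmt : ∀ e ∈ (C.filter (fun e => ¬(a ∈ e.2 ∧ b ∈ e.2))).filter
          (fun e => e.2.image (contr a b) = ρ),
          e.2 ∈ ((C.filter (fun e => ¬(a ∈ e.2 ∧ b ∈ e.2))).filter
            (fun e => e.2.image (contr a b) = ρ)).image (fun e => e.2) :=
        fun e he => Finset.mem_image_of_mem _ he
      rw [Finset.card_eq_sum_card_fiberwise hmt]
      refine even_sum_nat _ _ ?_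
      intro τ hτ
      obtain ⟨e₀, he₀, he₀τ⟩ := Finset.mem_image.mp hτ
      obtain ⟨he₀F, he₀im⟩ := Finset.mem_filter.mp he₀
      obtain ⟨he₀C, he₀nc⟩ := Finset.mem_filter.mp he₀F
      have hfib : ((C.filter (fun e => ¬(a ∈ e.2 ∧ b ∈ e.2))).filter
          (fun e => e.2.image (contr a b) = ρ)).filter (fun e => e.2 = τ)
          = C.filter (fun e => e.2 = τ) := by
        ext e
        simp only [Finset.mem_filter]
        constructor
        · rintro ⟨⟨⟨h1, h2⟩, h3⟩, h4⟩
          exact ⟨h1, h4⟩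
        · rintro ⟨h1, h2⟩
          refine ⟨⟨⟨h1, ?_⟩, ?_⟩, h2⟩
          · rw [h2, ← he₀τ]; exact he₀nc
          · rw [h2, ← he₀τ]; exact he₀im
      rw [hfib]
      exact even_deg2 hC τ
    have hCPe : Even ((C.filter (fun e => e.1.image (contr a b) = ρ)).card) := by
      have hmt : ∀ e ∈ C.filter (fun e => e.1.image (contr a b) = ρ),
          e.1 ∈ (C.filter (fun e => e.1.image (contr a b) = ρ)).image (fun e => e.1) :=
        fun e he => Finset.mem_image_of_mem _ he
      rw [Finset.card_eq_sum_card_fiberwise hmt]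
      refine even_sum_nat _ _ ?_
      intro σ hσ
      obtain ⟨e₀, he₀, he₀σ⟩ := Finset.mem_image.mp hσ
      obtain ⟨he₀C, he₀im⟩ := Finset.mem_filter.mp he₀
      have hfib : (C.filter (fun e => e.1.image (contr a b) = ρ)).filter (fun e => e.1 = σ)
          = C.filter (fun e => e.1 = σ) := by
        ext e
        simp only [Finset.mem_filter]
        constructor
        · rintro ⟨⟨h1, h2⟩, h3⟩
          exact ⟨h1, h3⟩
        · rintro ⟨h1, h2⟩
          refine ⟨⟨h1, ?_⟩, h2⟩
          rw [h2, ← he₀σ]; exact he₀im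
      rw [hfib]
      exact even_deg1 hC σ
    have hccE : Even ((C.filter (fun e =>
        (e.1.image (contr a b) = ρ) ∧ (a ∈ e.2 ∧ b ∈ e.2))).card) := by
      by_cases hρ : a ∈ ρ ∧ b ∉ ρ
      · have hEq : C.filter (fun e => (e.1.image (contr a b) = ρ) ∧ (a ∈ e.2 ∧ b ∈ e.2))
            = C.filter (fun e => e.2 = insert b ρ) := by
          ext e
          simp only [Finset.mem_filter]
          constructor
          · rintro ⟨heC, him, hcoll⟩
            refine ⟨heC, ?_⟩
            have hedge := hC.1 e heC
            have hnc1 : ¬(a ∈ e.1 ∧ b ∈ e.1) := fun h => hL ⟨e, heC, h⟩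
            have hcc : e.2.card = e.1.card + 1 := by rw [hedge.2.2.2.1, hedge.2.2.1]
            rcases face_of_coll hedge.2.2.2.2 hcc hcoll.1 hcoll.2 hnc1 with hf | hf
            · have hbe1 : b ∈ e.1 := by
                rw [hf]; exact Finset.mem_erase.mpr ⟨hne.symm, hcoll.2⟩
              rw [image_contr_of_mem hbe1] at him
              rw [← him]
              ext z
              simp only [Finset.mem_insert, Finset.mem_erase, hf]
              constructor
              · intro hz
                by_cases hzb : z = b
                · exact Or.inl hzb
                · by_cases hza : z = a
                  · exact Or.inr (Or.inl hza)
                  · exact Or.inr (Or.inr ⟨hzb, hza, hz⟩)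
              · rintro (rfl | rfl | ⟨h1, h2, h3⟩)
                · exact hcoll.2
                · exact hcoll.1
                · exact h3
            · have hbe1 : b ∉ e.1 := by rw [hf]; exact Finset.notMem_erase b e.2
              rw [image_contr_of_not_mem hbe1] at him
              rw [← him, hf, Finset.insert_erase hcoll.2]
          · rintro ⟨heC, h2⟩
            have hcoll : a ∈ e.2 ∧ b ∈ e.2 := by
              rw [h2]
              exact ⟨Finset.mem_insert_of_mem hρ.1, Finset.mem_insert_self b ρ⟩
            refine ⟨heC, ?_, hcoll⟩
            have hedge := hC.1 e heC
            have hnc1 : ¬(a ∈ e.1 ∧ b ∈ e.1) := fun h => hL ⟨e, heC, h⟩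
            have hcc : e.2.card = e.1.card + 1 := by rw [hedge.2.2.2.1, hedge.2.2.1]
            rcases face_of_coll hedge.2.2.2.2 hcc hcoll.1 hcoll.2 hnc1 with hf | hf
            · have hbe1 : b ∈ e.1 := by
                rw [hf]; exact Finset.mem_erase.mpr ⟨hne.symm, hcoll.2⟩
              rw [image_contr_of_mem hbe1, hf, h2]
              ext z
              simp only [Finset.mem_insert, Finset.mem_erase]
              constructor
              · rintro (rfl | ⟨h1, h2', rfl | h3'⟩)
                · exact hρ.1
                · exact absurd rfl h1
                · exact h3'
              · intro hz
                by_cases hza : z = a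
                · exact Or.inl hza
                · exact Or.inr ⟨fun h => hρ.2 (h ▸ hz), hza, Or.inr hz⟩
            · have hbe1 : b ∉ e.1 := by rw [hf]; exact Finset.notMem_erase b e.2
              rw [image_contr_of_not_mem hbe1, hf, h2, Finset.erase_insert hρ.2]
        rw [hEq]
        exact even_deg2 hC (insert b ρ)
      · have hEq : C.filter (fun e =>
            (e.1.image (contr a b) = ρ) ∧ (a ∈ e.2 ∧ b ∈ e.2)) = ∅ := by
          rw [Finset.filter_eq_empty_iff]
          rintro e heC ⟨him, hcoll⟩
          have hedge := hC.1 e heC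
          have hnc1 : ¬(a ∈ e.1 ∧ b ∈ e.1) := fun h => hL ⟨e, heC, h⟩
          have hcc : e.2.card = e.1.card + 1 := by rw [hedge.2.2.2.1, hedge.2.2.1]
          have haρ : a ∈ ρ := by
            rw [← him]
            rcases face_of_coll hedge.2.2.2.2 hcc hcoll.1 hcoll.2 hnc1 with hf | hf
            · have hbe1 : b ∈ e.1 := by
                rw [hf]; exact Finset.mem_erase.mpr ⟨hne.symm, hcoll.2⟩
              rw [image_contr_of_mem hbe1]
              exact Finset.mem_insert_self a _
            · have hae1 : a ∈ e.1 := by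
                rw [hf]; exact Finset.mem_erase.mpr ⟨hne, hcoll.1⟩
              exact Finset.mem_image.mpr ⟨a, hae1, contr_ne a hne⟩
          have hbρ : b ∉ ρ := him ▸ not_mem_image_contr hne e.1
          exact hρ ⟨haρ, hbρ⟩
        rw [hEq]
        simp
    have hsplit : (C.filter (fun e => e.1.image (contr a b) = ρ)).card
        = ((C.filter (fun e => ¬(a ∈ e.2 ∧ b ∈ e.2))).filter
            (fun e => e.1.image (contr a b) = ρ)).card
          + (C.filter (fun e =>
              (e.1.image (contr a b) = ρ) ∧ (a ∈ e.2 ∧ b ∈ e.2))).card := by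
      have h0 := Finset.card_filter_add_card_filter_not
        (s := C.filter (fun e => e.1.image (contr a b) = ρ))
        (p := fun e => a ∈ e.2 ∧ b ∈ e.2)
      rw [Finset.filter_filter, Finset.filter_filter] at h0
      have e1 : C.filter (fun e => e.1.image (contr a b) = ρ ∧ (a ∈ e.2 ∧ b ∈ e.2))
          = C.filter (fun e => (e.1.image (contr a b) = ρ) ∧ (a ∈ e.2 ∧ b ∈ e.2)) := rfl
      have e2 : C.filter (fun e => e.1.image (contr a b) = ρ ∧ ¬(a ∈ e.2 ∧ b ∈ e.2))
          = (C.filter (fun e => ¬(a ∈ e.2 ∧ b ∈ e.2))).filter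
              (fun e => e.1.image (contr a b) = ρ) := by
        rw [Finset.filter_filter]
        exact Finset.filter_congr (fun e _ => by tauto)
      rw [e1, e2] at h0
      omega
    rw [hd1, hd2]
    rw [Nat.even_iff] at hd2e hCPe hccE ⊢
    omega


lemma prod_pm_mem {α : Type*} [DecidableEq α] (s : Finset α) (f : α → ℤ)
    (h : ∀ x ∈ s, f x = 1 ∨ f x = -1) :
    (∏ x ∈ s, f x) = 1 ∨ (∏ x ∈ s, f x) = -1 := by
  rw [prod_pm s f h]
  rcases Nat.even_or_odd ((s.filter (fun x => f x = -1)).card) with h1 | h1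
  · exact Or.inl h1.neg_one_pow
  · exact Or.inr h1.neg_one_pow

lemma incSign_pm (σ τ : Finset V) : incSign σ τ = 1 ∨ incSign σ τ = -1 := by
  refine prod_pm_mem _ _ (fun x _ => ?_)
  rcases Nat.even_or_odd ((τ.filter (fun z => z < x)).card) with h1 | h1
  · exact Or.inl h1.neg_one_pow
  · exact Or.inr h1.neg_one_pow

lemma pm_pow_parity {x : ℤ} (hx : x = 1 ∨ x = -1) {m k : ℕ} (h : Even (m + k)) :
    x ^ m = x ^ k := by
  rcases hx with rfl | rfl
  · simp
  · exact npow_eq (by rw [Nat.even_add] at h; rw [Nat.even_iff, Nat.even_iff] at h; omega)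

/-- The per-simplex sign correction relating the two orientations across a contraction. -/
def uo (a b : V) (o o' : Finset V → ℤ) (σ : Finset V) : ℤ :=
  o' (σ.image (contr a b)) * o σ * sgn a b σ

lemma uo_pm {K K' : SC V} {o o' : Finset V → ℤ}
    (ho : IsOrientation K o) (ho' : IsOrientation K' o')
    (hK' : K'.faces = K.faces.image (Finset.image (contr a b)))
    {σ : Finset V} (hσ : σ ∈ K.faces) :
    uo a b o o' σ = 1 ∨ uo a b o o' σ = -1 := by
  have h1 := ho σ hσ
  have h2 := ho' (σ.image (contr a b)) (by rw [hK']; exact Finset.mem_image_of_mem _ hσ)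
  have h3 := sgn_pm a b σ
  unfold uo
  rcases h1 with h1 | h1 <;> rcases h2 with h2 | h2 <;> rcases h3 with h3 | h3 <;>
    rw [h1, h2, h3] <;> norm_num

lemma edgeWeight_pm {K : SC V} {o : Finset V → ℤ} (ho : IsOrientation K o)
    {e : Finset V × Finset V} (h1 : e.1 ∈ K.faces) (h2 : e.2 ∈ K.faces) :
    edgeWeight o e = 1 ∨ edgeWeight o e = -1 := by
  have ha := ho e.1 h1
  have hb := ho e.2 h2
  have hc := incSign_pm e.1 e.2
  unfold edgeWeight
  rcases ha with ha | ha <;> rcases hb with hb | hb <;> rcases hc with hc | hc <;>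
    rw [ha, hb, hc] <;> norm_num

lemma image_erase_a (hne : a ≠ b) {τ : Finset V} (ha : a ∈ τ) (hb : b ∈ τ) :
    (τ.erase a).image (contr a b) = τ.erase b := by
  rw [image_contr_of_mem (Finset.mem_erase.mpr ⟨hne.symm, hb⟩)]
  ext z
  simp only [Finset.mem_insert, Finset.mem_erase]
  constructor
  · rintro (rfl | ⟨h1, h2, h3⟩)
    · exact ⟨hne, ha⟩
    · exact ⟨h1, h3⟩
  · rintro ⟨h1, h2⟩
    by_cases hza : z = a
    · exact Or.inl hza
    · exact Or.inr ⟨h1, hza, h2⟩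

lemma key_id (hne : a ≠ b) {K K' : SC V} {o o' : Finset V → ℤ}
    (ho : IsOrientation K o) (ho' : IsOrientation K' o')
    (hK' : K'.faces = K.faces.image (Finset.image (contr a b)))
    {τ : Finset V} (hτ : τ ∈ K.faces) (ha : a ∈ τ) (hb : b ∈ τ) :
    (uo a b o o' (τ.erase a) * edgeWeight o (τ.erase a, τ))
      * (uo a b o o' (τ.erase b) * edgeWeight o (τ.erase b, τ)) = -1 := by
  have hea : τ.erase a ∈ K.faces :=
    K.down_closed τ hτ _ (Finset.erase_subset a τ)
      ⟨b, Finset.mem_erase.mpr ⟨hne.symm, hb⟩⟩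
  have heb : τ.erase b ∈ K.faces :=
    K.down_closed τ hτ _ (Finset.erase_subset b τ)
      ⟨a, Finset.mem_erase.mpr ⟨hne, ha⟩⟩
  have him1 : (τ.erase a).image (contr a b) = τ.erase b := image_erase_a hne ha hb
  have him2 : (τ.erase b).image (contr a b) = τ.erase b :=
    image_contr_of_not_mem (Finset.notMem_erase b τ)
  have hX : τ.erase b ∈ K'.faces := by
    rw [hK', ← him2]; exact Finset.mem_image_of_mem _ heb
  have hXsq : o' (τ.erase b) * o' (τ.erase b) = 1 := by
    rcases ho' _ hX with h | h <;> rw [h] <;> norm_num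
  have h1sq : o (τ.erase a) * o (τ.erase a) = 1 := by
    rcases ho _ hea with h | h <;> rw [h] <;> norm_num
  have h2sq : o (τ.erase b) * o (τ.erase b) = 1 := by
    rcases ho _ heb with h | h <;> rw [h] <;> norm_num
  have hτsq : o τ * o τ = 1 := by
    rcases ho _ hτ with h | h <;> rw [h] <;> norm_num
  have hS2 := sgn_S2 hne ha hb
  calc (uo a b o o' (τ.erase a) * edgeWeight o (τ.erase a, τ))
      * (uo a b o o' (τ.erase b) * edgeWeight o (τ.erase b, τ))
      = (o' (τ.erase b) * o' (τ.erase b)) * (o (τ.erase a) * o (τ.erase a))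
        * (o (τ.erase b) * o (τ.erase b)) * (o τ * o τ)
        * (sgn a b (τ.erase b) * incSign (τ.erase b) τ
            * (sgn a b (τ.erase a) * incSign (τ.erase a) τ)) := by
        unfold uo edgeWeight
        rw [him1, him2]
        ring
    _ = -1 := by rw [hXsq, h1sq, h2sq, hτsq, hS2]; ring

lemma fwd_parity (hne : a ≠ b) {K K' : SC V} {o o' : Finset V → ℤ}
    (ho : IsOrientation K o) (ho' : IsOrientation K' o')
    {p : ℕ} {C : Finset (Finset V × Finset V)}
    (hK' : K'.faces = K.faces.image (Finset.image (contr a b)))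
    (hC : IsCircuit K (p + 1) C) (hM : ¬ContainsMirrorHigh a b C)
    (hL : ¬ContainsCollapsingLow a b C) :
    circWeight o C % 4 = circWeight o' (fwd a b C) % 4 := by
  classical
  have hinj := emap_injOn hne hC hM hL
  have hcir' := fwd_isCircuit hne hK' hC hM hL
  set F := C.filter (fun e => ¬(a ∈ e.2 ∧ b ∈ e.2)) with hF
  set Cc := C.filter (fun e => (a ∈ e.2 ∧ b ∈ e.2)) with hCc
  set T := Cc.image (fun e => e.2) with hT
  -- the collapsing fibers are complete pairs
  have hfibpair : ∀ τ ∈ T, C.filter (fun e => e.2 = τ)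
      = {(τ.erase a, τ), (τ.erase b, τ)} := by
    intro τ hτ
    obtain ⟨e₀, he₀, he₀τ⟩ := Finset.mem_image.mp hτ
    obtain ⟨he₀C, he₀c⟩ := Finset.mem_filter.mp he₀
    exact pairT hne hC hL (he₀τ ▸ he₀c.1) (he₀τ ▸ he₀c.2) ⟨e₀, he₀C, he₀τ⟩
  have hccfib : ∀ τ ∈ T, Cc.filter (fun e => e.2 = τ) = C.filter (fun e => e.2 = τ) := by
    intro τ hτ
    obtain ⟨e₀, he₀, he₀τ⟩ := Finset.mem_image.mp hτ
    obtain ⟨he₀C, he₀c⟩ := Finset.mem_filter.mp he₀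
    ext e
    simp only [hCc, Finset.mem_filter]
    constructor
    · rintro ⟨⟨h1, h2⟩, h3⟩; exact ⟨h1, h3⟩
    · rintro ⟨h1, h2⟩
      exact ⟨⟨h1, by rw [h2]; exact ⟨he₀τ ▸ he₀c.1, he₀τ ▸ he₀c.2⟩⟩, h2⟩
  have hTmem : ∀ τ ∈ T, τ ∈ K.faces ∧ a ∈ τ ∧ b ∈ τ ∧ τ.card = p + 2 := by
    intro τ hτ
    obtain ⟨e₀, he₀, he₀τ⟩ := Finset.mem_image.mp hτ
    obtain ⟨he₀C, he₀c⟩ := Finset.mem_filter.mp he₀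
    have hedge := hC.1 e₀ he₀C
    exact ⟨he₀τ ▸ hedge.2.1, he₀τ ▸ he₀c.1, he₀τ ▸ he₀c.2, he₀τ ▸ hedge.2.2.2.1⟩
  have hpairne : ∀ τ : Finset V, a ∈ τ → b ∈ τ →
      ((τ.erase a, τ) : Finset V × Finset V) ≠ (τ.erase b, τ) := by
    intro τ haτ hbτ h
    have h1 := congrArg Prod.fst h
    simp only at h1
    have hb' : b ∈ τ.erase a := Finset.mem_erase.mpr ⟨hne.symm, hbτ⟩
    rw [h1] at hb'
    exact Finset.notMem_erase b τ hb'
  -- cardinalities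
  have hcardC : C.card = F.card + Cc.card := by
    have h0 := Finset.card_filter_add_card_filter_not
      (s := C) (p := fun e => (a ∈ e.2 ∧ b ∈ e.2))
    have h1 : (C.filter (fun e => ¬(a ∈ e.2 ∧ b ∈ e.2))).card = F.card := by rw [hF]
    have h2 : (C.filter (fun e => (a ∈ e.2 ∧ b ∈ e.2))).card = Cc.card := by rw [hCc]
    omega
  have hcardCc : Cc.card = 2 * T.card := by
    have hmt : ∀ e ∈ Cc, e.2 ∈ T := fun e he => Finset.mem_image_of_mem _ he
    rw [Finset.card_eq_sum_card_fiberwise hmt]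
    have hfib2 : ∀ τ ∈ T, (Cc.filter (fun e => e.2 = τ)).card = 2 := by
      intro τ hτ
      obtain ⟨-, haτ, hbτ, -⟩ := hTmem τ hτ
      have hni : ((τ.erase a, τ) : Finset V × Finset V)
          ∉ ({(τ.erase b, τ)} : Finset (Finset V × Finset V)) := by
        simp only [Finset.mem_singleton]
        exact hpairne τ haτ hbτ
      rw [hccfib τ hτ, hfibpair τ hτ, Finset.card_insert_of_notMem hni,
        Finset.card_singleton]
    rw [Finset.sum_congr rfl hfib2, Finset.sum_const, smul_eq_mul, mul_comm]
  have hcardfwd : (fwd a b C).card = F.card := by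
    rw [fwd, ← hF]
    exact Finset.card_image_of_injOn hinj
  -- weights are ±1
  have hwpm : ∀ e ∈ C, edgeWeight o e = 1 ∨ edgeWeight o e = -1 := by
    intro e he
    exact edgeWeight_pm ho (hC.1 e he).1 (hC.1 e he).2.1
  have hw'pm : ∀ x ∈ fwd a b C, edgeWeight o' x = 1 ∨ edgeWeight o' x = -1 := by
    intro x hx
    exact edgeWeight_pm ho' (hcir'.1 x hx).1 (hcir'.1 x hx).2.1
  -- claim A : weight transport along emap
  have hclaimA : ∀ e ∈ F, edgeWeight o' (emap a b e)
      = uo a b o o' e.1 * uo a b o o' e.2 * edgeWeight o e := by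
    intro e he
    obtain ⟨heC, henc⟩ := Finset.mem_filter.mp (hF ▸ he)
    have hedge := hC.1 e heC
    have hnc1 : ¬(a ∈ e.1 ∧ b ∈ e.1) := fun h => hL ⟨e, heC, h⟩
    have hcc : e.2.card = e.1.card + 1 := by rw [hedge.2.2.2.1, hedge.2.2.1]
    have hS1 := sgn_S1 hne henc hedge.2.2.2.2 hcc
    have h1sq : o e.1 * o e.1 = 1 := by
      rcases ho _ hedge.1 with h | h <;> rw [h] <;> norm_num
    have h2sq : o e.2 * o e.2 = 1 := by
      rcases ho _ hedge.2.1 with h | h <;> rw [h] <;> norm_num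
    show o' (e.1.image (contr a b)) * o' (e.2.image (contr a b))
        * incSign (e.1.image (contr a b)) (e.2.image (contr a b)) = _
    rw [hS1]
    unfold uo edgeWeight
    calc o' (e.1.image (contr a b)) * o' (e.2.image (contr a b))
        * (sgn a b e.1 * sgn a b e.2 * incSign e.1 e.2)
        = (o e.1 * o e.1) * (o e.2 * o e.2) * (o' (e.1.image (contr a b))
            * o' (e.2.image (contr a b)) * (sgn a b e.1 * sgn a b e.2 * incSign e.1 e.2)) := by
          rw [h1sq, h2sq]; ring
      _ = _ := by ring
  -- claim B : product of the top corrections over F is 1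
  have hclaimB : (∏ e ∈ F, uo a b o o' e.2) = 1 := by
    have hmt : ∀ e ∈ F, e.2 ∈ F.image (fun e => e.2) := fun e he => Finset.mem_image_of_mem _ he
    rw [← Finset.prod_fiberwise_of_maps_to hmt (fun e => uo a b o o' e.2)]
    refine Finset.prod_eq_one (fun τ hτ => ?_)
    obtain ⟨e₀, he₀, he₀τ⟩ := Finset.mem_image.mp hτ
    obtain ⟨he₀C, he₀nc⟩ := Finset.mem_filter.mp (hF ▸ he₀)
    have hτK : τ ∈ K.faces := he₀τ ▸ (hC.1 e₀ he₀C).2.1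
    have hfe : F.filter (fun e => e.2 = τ) = C.filter (fun e => e.2 = τ) := by
      ext e
      simp only [hF, Finset.mem_filter]
      constructor
      · rintro ⟨⟨h1, h2⟩, h3⟩; exact ⟨h1, h3⟩
      · rintro ⟨h1, h2⟩
        exact ⟨⟨h1, by rw [h2, ← he₀τ]; exact he₀nc⟩, h2⟩
    have hcongr : ∀ e ∈ F.filter (fun e => e.2 = τ), uo a b o o' e.2 = uo a b o o' τ :=
      fun e he => by rw [(Finset.mem_filter.mp he).2]
    rw [Finset.prod_congr rfl hcongr, Finset.prod_const]
    have heven : Even ((F.filter (fun e => e.2 = τ)).card) := by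
      rw [hfe]; exact even_deg2 hC τ
    rcases uo_pm ho ho' hK' hτK with h | h
    · rw [h, one_pow]
    · rw [h]; exact heven.neg_one_pow
  -- claim C : product of bottom corrections over F equals that over Cc
  have hclaimC : (∏ e ∈ F, uo a b o o' e.1) = ∏ e ∈ Cc, uo a b o o' e.1 := by
    have hmtF : ∀ e ∈ F, e.1 ∈ C.image (fun e => e.1) :=
      fun e he => Finset.mem_image_of_mem _ (Finset.mem_of_mem_filter e (hF ▸ he))
    have hmtCc : ∀ e ∈ Cc, e.1 ∈ C.image (fun e => e.1) :=
      fun e he => Finset.mem_image_of_mem _ (Finset.mem_of_mem_filter e (hCc ▸ he))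
    rw [← Finset.prod_fiberwise_of_maps_to hmtF (fun e => uo a b o o' e.1),
      ← Finset.prod_fiberwise_of_maps_to hmtCc (fun e => uo a b o o' e.1)]
    refine Finset.prod_congr rfl (fun σ hσ => ?_)
    obtain ⟨e₀, he₀, he₀σ⟩ := Finset.mem_image.mp hσ
    have hσK : σ ∈ K.faces := he₀σ ▸ (hC.1 e₀ he₀).1
    have hcongrF : ∀ e ∈ F.filter (fun e => e.1 = σ), uo a b o o' e.1 = uo a b o o' σ :=
      fun e he => by rw [(Finset.mem_filter.mp he).2]
    have hcongrCc : ∀ e ∈ Cc.filter (fun e => e.1 = σ), uo a b o o' e.1 = uo a b o o' σ :=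
      fun e he => by rw [(Finset.mem_filter.mp he).2]
    rw [Finset.prod_congr rfl hcongrF, Finset.prod_const,
      Finset.prod_congr rfl hcongrCc, Finset.prod_const]
    have hsplitσ : (F.filter (fun e => e.1 = σ)).card + (Cc.filter (fun e => e.1 = σ)).card
        = (C.filter (fun e => e.1 = σ)).card := by
      have h0 := Finset.card_filter_add_card_filter_not
        (s := C.filter (fun e => e.1 = σ)) (p := fun e => (a ∈ e.2 ∧ b ∈ e.2))
      rw [Finset.filter_filter, Finset.filter_filter] at h0
      have e1 : C.filter (fun e => e.1 = σ ∧ (a ∈ e.2 ∧ b ∈ e.2))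
          = Cc.filter (fun e => e.1 = σ) := by
        rw [hCc, Finset.filter_filter]
        exact Finset.filter_congr (fun e _ => by tauto)
      have e2 : C.filter (fun e => e.1 = σ ∧ ¬(a ∈ e.2 ∧ b ∈ e.2))
          = F.filter (fun e => e.1 = σ) := by
        rw [hF, Finset.filter_filter]
        exact Finset.filter_congr (fun e _ => by tauto)
      rw [e1, e2] at h0
      omega
    have heven : Even ((F.filter (fun e => e.1 = σ)).card + (Cc.filter (fun e => e.1 = σ)).card) := by
      rw [hsplitσ]; exact even_deg1 hC σ
    exact pm_pow_parity (uo_pm ho ho' hK' hσK) heven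
  -- claim D : the collapsing contribution
  have hclaimD : (∏ e ∈ Cc, (uo a b o o' e.1 * edgeWeight o e)) = (-1 : ℤ) ^ T.card := by
    have hmt : ∀ e ∈ Cc, e.2 ∈ T := fun e he => Finset.mem_image_of_mem _ he
    rw [← Finset.prod_fiberwise_of_maps_to hmt (fun e => uo a b o o' e.1 * edgeWeight o e)]
    have hfibD : ∀ τ ∈ T,
        (∏ e ∈ Cc.filter (fun e => e.2 = τ), (uo a b o o' e.1 * edgeWeight o e)) = -1 := by
      intro τ hτ
      obtain ⟨hτK, haτ, hbτ, -⟩ := hTmem τ hτ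
      have hni : ((τ.erase a, τ) : Finset V × Finset V)
          ∉ ({(τ.erase b, τ)} : Finset (Finset V × Finset V)) := by
        simp only [Finset.mem_singleton]
        exact hpairne τ haτ hbτ
      rw [hccfib τ hτ, hfibpair τ hτ, Finset.prod_insert hni, Finset.prod_singleton]
      exact key_id hne ho ho' hK' hτK haτ hbτ
    rw [Finset.prod_congr rfl hfibD, Finset.prod_const]
  -- put the product identities together
  have hprodC : (∏ e ∈ C, edgeWeight o e)
      = (∏ e ∈ F, edgeWeight o e) * ∏ e ∈ Cc, edgeWeight o e := by
    rw [hF, hCc, ← Finset.prod_filter_mul_prod_filter_not C (fun e => ¬(a ∈ e.2 ∧ b ∈ e.2))]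
    congr 1
    exact Finset.prod_congr (Finset.filter_congr (fun e _ => by tauto)) (fun _ _ => rfl)
  have hprodfwd : (∏ x ∈ fwd a b C, edgeWeight o' x)
      = (∏ e ∈ F, uo a b o o' e.1) * (∏ e ∈ F, uo a b o o' e.2)
        * ∏ e ∈ F, edgeWeight o e := by
    rw [fwd, ← hF, Finset.prod_image hinj]
    rw [Finset.prod_congr rfl hclaimA]
    rw [Finset.prod_mul_distrib, Finset.prod_mul_distrib]
  have hFsq : (∏ e ∈ F, edgeWeight o e) * (∏ e ∈ F, edgeWeight o e) = 1 := by
    rcases prod_pm_mem F (edgeWeight o)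
      (fun e he => hwpm e (Finset.mem_of_mem_filter e (hF ▸ he))) with h | h <;>
      rw [h] <;> norm_num
  have hmain : (∏ e ∈ C, edgeWeight o e) * (∏ x ∈ fwd a b C, edgeWeight o' x)
      = (-1 : ℤ) ^ T.card := by
    rw [hprodC, hprodfwd, hclaimB, hclaimC]
    calc (∏ e ∈ F, edgeWeight o e) * (∏ e ∈ Cc, edgeWeight o e)
        * ((∏ e ∈ Cc, uo a b o o' e.1) * 1 * (∏ e ∈ F, edgeWeight o e))
        = ((∏ e ∈ F, edgeWeight o e) * (∏ e ∈ F, edgeWeight o e))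
          * ((∏ e ∈ Cc, uo a b o o' e.1) * (∏ e ∈ Cc, edgeWeight o e)) := by ring
      _ = (∏ e ∈ Cc, uo a b o o' e.1) * (∏ e ∈ Cc, edgeWeight o e) := by
          rw [hFsq, one_mul]
      _ = ∏ e ∈ Cc, (uo a b o o' e.1 * edgeWeight o e) := by
          rw [Finset.prod_mul_distrib]
      _ = (-1 : ℤ) ^ T.card := hclaimD
  -- extract the parity statement
  set Nc := (C.filter (fun e => edgeWeight o e = -1)).card with hNc
  set N' := ((fwd a b C).filter (fun x => edgeWeight o' x = -1)).card with hN'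
  have hpowC : (∏ e ∈ C, edgeWeight o e) = (-1 : ℤ) ^ Nc := prod_pm C _ hwpm
  have hpowfwd : (∏ x ∈ fwd a b C, edgeWeight o' x) = (-1 : ℤ) ^ N' := prod_pm _ _ hw'pm
  have hparity : Even (Nc + N' + T.card) := by
    have h1 : (-1 : ℤ) ^ (Nc + N' + T.card) = 1 := by
      rw [pow_add, pow_add, ← hpowC, ← hpowfwd, hmain, ← pow_add]
      exact Even.neg_one_pow ⟨T.card, by ring⟩
    exact (neg_one_pow_eq_one_iff_even (by norm_num)).mp h1
  -- final arithmetic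
  have hsum1 : circWeight o C = (C.card : ℤ) - 2 * Nc := sum_pm C _ hwpm
  have hsum2 : circWeight o' (fwd a b C) = ((fwd a b C).card : ℤ) - 2 * N' := sum_pm _ _ hw'pm
  rw [hsum1, hsum2, hcardfwd, hcardC, hcardCc]
  obtain ⟨k, hk⟩ := hparity
  push_cast
  omega


lemma fwd_chord (hne : a ≠ b) {K K' : SC V} {p : ℕ} {C : Finset (Finset V × Finset V)}
    (hK' : K'.faces = K.faces.image (Finset.image (contr a b)))
    (hC : IsCircuit K (p + 1) C) (hM : ¬ContainsMirrorHigh a b C)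
    (hL : ¬ContainsCollapsingLow a b C)
    (h : HasChord K (p + 1) C) : HasChord K' (p + 1) (fwd a b C) := by
  classical
  obtain ⟨e, hedge, heC, ⟨c₀, hc₀C, hc₀1⟩, ⟨c', hc'C, hc'2⟩⟩ := h
  have hσnc : ¬(a ∈ e.1 ∧ b ∈ e.1) := by
    intro hh
    exact hL ⟨c₀, hc₀C, by rw [hc₀1]; exact hh⟩
  have hτnc : ¬(a ∈ e.2 ∧ b ∈ e.2) := by
    intro hcoll
    have hpair := pairT hne hC hL hcoll.1 hcoll.2 ⟨c', hc'C, hc'2⟩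
    have hcc : e.2.card = e.1.card + 1 := by rw [hedge.2.2.2.1, hedge.2.2.1]
    rcases face_of_coll hedge.2.2.2.2 hcc hcoll.1 hcoll.2 hσnc with hf | hf
    · apply heC
      have he' : e = (e.2.erase a, e.2) := Prod.ext hf rfl
      have hm : ((e.2.erase a, e.2) : Finset V × Finset V)
          ∈ C.filter (fun d => d.2 = e.2) := by
        rw [hpair]; exact Finset.mem_insert_self _ _
      rw [he']
      exact Finset.mem_of_mem_filter _ hm
    · apply heC
      have he' : e = (e.2.erase b, e.2) := Prod.ext hf rfl
      have hm : ((e.2.erase b, e.2) : Finset V × Finset V)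
          ∈ C.filter (fun d => d.2 = e.2) := by
        rw [hpair]
        exact Finset.mem_insert_of_mem (Finset.mem_singleton_self _)
      rw [he']
      exact Finset.mem_of_mem_filter _ hm
  refine ⟨emap a b e, ⟨?_, ?_, ?_, ?_, ?_⟩, ?_, ?_, ?_⟩
  · rw [hK']; exact Finset.mem_image_of_mem _ hedge.1
  · rw [hK']; exact Finset.mem_image_of_mem _ hedge.2.1
  · show (e.1.image (contr a b)).card = p + 1
    rw [card_image_contr hne hσnc]; exact hedge.2.2.1
  · show (e.2.image (contr a b)).card = p + 1 + 1
    rw [card_image_contr hne hτnc]; exact hedge.2.2.2.1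
  · exact Finset.image_subset_image hedge.2.2.2.2
  · -- the image edge is not in the image circuit
    intro hmem
    obtain ⟨d, hd, hde⟩ := Finset.mem_image.mp hmem
    obtain ⟨hdC, hdnc⟩ := Finset.mem_filter.mp hd
    have h2 : d.2 = e.2 := by
      rcases same_image_cases hne hdnc hτnc (congrArg Prod.snd hde) with hh | hh | hh
      · exact hh
      · exact absurd ⟨d, hdC, c', hc'C, by rw [hc'2]; exact hh⟩ hM
      · exact absurd ⟨c', hc'C, d, hdC, by rw [hc'2]; exact hh⟩ hM
    have hdnc1 : ¬(a ∈ d.1 ∧ b ∈ d.1) := fun hh => hL ⟨d, hdC, hh⟩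
    have h1 : d.1 = e.1 := by
      rcases same_image_cases hne hdnc1 hσnc (congrArg Prod.fst hde) with hh | hh | hh
      · exact hh
      · exact absurd ⟨h2 ▸ (hC.1 d hdC).2.2.2.2 hh.1, hedge.2.2.2.2 hh.2.1⟩ hτnc
      · exact absurd ⟨hedge.2.2.2.2 hh.1, h2 ▸ (hC.1 d hdC).2.2.2.2 hh.2.1⟩ hτnc
    exact heC (by rw [← Prod.ext h1 h2]; exact hdC)
  · -- bottom endpoint is hit
    have hdeg : Even ((C.filter (fun d => d.1 = e.1)).card) := even_deg1 hC e.1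
    have hpos : 0 < (C.filter (fun d => d.1 = e.1)).card :=
      Finset.card_pos.mpr ⟨c₀, Finset.mem_filter.mpr ⟨hc₀C, hc₀1⟩⟩
    have hval : ∀ d ∈ C.filter (fun d => d.1 = e.1 ∧ (a ∈ d.2 ∧ b ∈ d.2)),
        d.2 = (if a ∈ e.1 then insert b e.1 else insert a e.1) := by
      intro d hd
      obtain ⟨hdC, hd1, hdcoll⟩ := Finset.mem_filter.mp hd
      have hdedge := hC.1 d hdC
      have hcc : d.2.card = d.1.card + 1 := by rw [hdedge.2.2.2.1, hdedge.2.2.1]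
      have hdnc1 : ¬(a ∈ d.1 ∧ b ∈ d.1) := fun hh => hL ⟨d, hdC, hh⟩
      rcases face_of_coll hdedge.2.2.2.2 hcc hdcoll.1 hdcoll.2 hdnc1 with hf | hf
      · -- d.1 = d.2.erase a, hence d.2 = insert a d.1 and b ∈ d.1
        have hbe1 : b ∈ d.1 := by rw [hf]; exact Finset.mem_erase.mpr ⟨hne.symm, hdcoll.2⟩
        have hae1 : a ∉ e.1 := fun hh => hσnc ⟨hh, hd1 ▸ hbe1⟩
        rw [if_neg hae1, ← hd1, ← Finset.insert_erase hdcoll.1, hf]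
      · have hae1 : a ∈ d.1 := by rw [hf]; exact Finset.mem_erase.mpr ⟨hne, hdcoll.1⟩
        rw [if_pos (hd1 ▸ hae1), ← hd1, ← Finset.insert_erase hdcoll.2, hf]
    have hones : (C.filter (fun d => d.1 = e.1 ∧ (a ∈ d.2 ∧ b ∈ d.2))).card ≤ 1 := by
      rw [Finset.card_le_one]
      intro d hd d' hd'
      have h1 := (Finset.mem_filter.mp hd).2.1
      have h1' := (Finset.mem_filter.mp hd').2.1
      exact Prod.ext (h1.trans h1'.symm) ((hval d hd).trans (hval d' hd').symm)
    have hsplit : (C.filter (fun d => d.1 = e.1)).card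
        = ((C.filter (fun d => ¬(a ∈ d.2 ∧ b ∈ d.2))).filter (fun d => d.1 = e.1)).card
          + (C.filter (fun d => d.1 = e.1 ∧ (a ∈ d.2 ∧ b ∈ d.2))).card := by
      have h0 := Finset.card_filter_add_card_filter_not
        (s := C.filter (fun d => d.1 = e.1)) (p := fun d => (a ∈ d.2 ∧ b ∈ d.2))
      rw [Finset.filter_filter, Finset.filter_filter] at h0
      have e2 : C.filter (fun d => d.1 = e.1 ∧ ¬(a ∈ d.2 ∧ b ∈ d.2))
          = (C.filter (fun d => ¬(a ∈ d.2 ∧ b ∈ d.2))).filter (fun d => d.1 = e.1) := by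
        rw [Finset.filter_filter]
        exact Finset.filter_congr (fun d _ => by tauto)
      rw [e2] at h0
      omega
    have hFpos : 0 < ((C.filter (fun d => ¬(a ∈ d.2 ∧ b ∈ d.2))).filter
        (fun d => d.1 = e.1)).card := by
      rw [Nat.even_iff] at hdeg
      omega
    obtain ⟨c₁, hc₁⟩ := Finset.card_pos.mp hFpos
    obtain ⟨hc₁F, hc₁1⟩ := Finset.mem_filter.mp hc₁
    refine ⟨emap a b c₁, Finset.mem_image_of_mem _ hc₁F, ?_⟩
    show c₁.1.image (contr a b) = e.1.image (contr a b)
    rw [hc₁1]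
  · -- top endpoint is hit
    have hc'F : c' ∈ C.filter (fun d => ¬(a ∈ d.2 ∧ b ∈ d.2)) :=
      Finset.mem_filter.mpr ⟨hc'C, by rw [hc'2]; exact hτnc⟩
    refine ⟨emap a b c', Finset.mem_image_of_mem _ hc'F, ?_⟩
    show c'.2.image (contr a b) = e.2.image (contr a b)
    rw [hc'2]


lemma link_insert (hne : a ≠ b) {K : SC V} (hab : ({a, b} : Finset V) ∈ K.faces)
    {p : ℕ} (hpl : PLink K a b (p : ℤ)) {ξ : Finset V} (hcard : ξ.card = p)
    (haξ : a ∉ ξ) (hbξ : b ∉ ξ)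
    (hX : insert a ξ ∈ K.faces) (hY : insert b ξ ∈ K.faces) :
    insert a (insert b ξ) ∈ K.faces := by
  rcases Nat.eq_zero_or_pos p with hp | hp
  · have hξ : ξ = ∅ := Finset.card_eq_zero.mp (by omega)
    subst hξ
    simpa using hab
  · have hplink : ∀ ζ ∈ linkV K a ∩ linkV K b, (ζ.card : ℤ) = (p : ℤ) → ζ ∈ linkE K a b := by
      rcases hpl with hle | ⟨-, h⟩
      · exfalso
        have : (0 : ℤ) < (p : ℤ) := by exact_mod_cast hp
        omega
      · exact h
    have hξne : ξ.Nonempty := Finset.card_pos.mp (by omega)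
    have hξK : ξ ∈ K.faces := K.down_closed _ hX _ (Finset.subset_insert a ξ) hξne
    have hmemA : ξ ∈ linkV K a := by
      constructor
      · refine ⟨hξK, insert a ξ, ⟨hX, {a}, rfl, ?_⟩, Finset.subset_insert a ξ⟩
        exact Finset.singleton_subset_iff.mpr (Finset.mem_insert_self a ξ)
      · rintro ⟨-, σ, ⟨hσK, s, hs, hσs⟩, hσξ⟩
        have hs' : s = {a} := hs
        obtain ⟨x, hx⟩ := K.nonempty_of_mem σ hσK
        have hxa : x = a := by
          have := hσs hx
          rw [hs'] at this
          exact Finset.mem_singleton.mp this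
        exact haξ (hσξ (hxa ▸ hx))
    have hmemB : ξ ∈ linkV K b := by
      constructor
      · refine ⟨hξK, insert b ξ, ⟨hY, {b}, rfl, ?_⟩, Finset.subset_insert b ξ⟩
        exact Finset.singleton_subset_iff.mpr (Finset.mem_insert_self b ξ)
      · rintro ⟨-, σ, ⟨hσK, s, hs, hσs⟩, hσξ⟩
        have hs' : s = {b} := hs
        obtain ⟨x, hx⟩ := K.nonempty_of_mem σ hσK
        have hxb : x = b := by
          have := hσs hx
          rw [hs'] at this
          exact Finset.mem_singleton.mp this
        exact hbξ (hσξ (hxb ▸ hx))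
    have hlk := hplink ξ ⟨hmemA, hmemB⟩ (by exact_mod_cast hcard)
    obtain ⟨⟨-, τ, ⟨hτK, s, hs, hsτ⟩, hξτ⟩, -⟩ := hlk
    have hs' : s = ({a, b} : Finset V) := hs
    refine K.down_closed τ hτK _ ?_ ⟨a, Finset.mem_insert_self a _⟩
    intro z hz
    rcases Finset.mem_insert.mp hz with rfl | hz'
    · exact hsτ (hs' ▸ Finset.mem_insert_self z {b})
    · rcases Finset.mem_insert.mp hz' with rfl | hz''
      · exact hsτ (hs' ▸ Finset.mem_insert_of_mem (Finset.mem_singleton_self z))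
      · exact hξτ hz''

/-- The canonical lift of a top simplex of `K'` to `K`. -/
def liftT (K : SC V) (a b : V) (τ : Finset V) : Finset V :=
  if τ ∈ K.faces then τ else insert b (τ.erase a)

/-- The canonical lift of an edge of `G_q(K')` to `G_q(K)`. -/
def liftE (K : SC V) (a b : V) (e : Finset V × Finset V) : Finset V × Finset V :=
  ((liftT K a b e.2).filter (fun x => contr a b x ∈ e.1), liftT K a b e.2)

/-- The mirror partner of a lower simplex. -/
def partner (a b : V) (σ : Finset V) : Finset V :=
  if b ∈ σ then insert a (σ.erase b) else insert b (σ.erase a)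

lemma liftT_spec (hne : a ≠ b) {K K' : SC V}
    (hK' : K'.faces = K.faces.image (Finset.image (contr a b)))
    {τ' : Finset V} (hτ' : τ' ∈ K'.faces) :
    liftT K a b τ' ∈ K.faces ∧ ¬(a ∈ liftT K a b τ' ∧ b ∈ liftT K a b τ')
      ∧ (liftT K a b τ').image (contr a b) = τ' ∧ (liftT K a b τ').card = τ'.card := by
  have hbτ' : b ∉ τ' := by
    rw [hK'] at hτ'
    obtain ⟨σ, hσ, rfl⟩ := Finset.mem_image.mp hτ'
    exact not_mem_image_contr hne σ
  by_cases hK : τ' ∈ K.faces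
  · rw [liftT, if_pos hK]
    exact ⟨hK, fun h => hbτ' h.2, image_contr_of_not_mem hbτ', rfl⟩
  · rw [liftT, if_neg hK]
    rw [hK'] at hτ'
    obtain ⟨σ, hσK, hσim⟩ := Finset.mem_image.mp hτ'
    by_cases hbσ : b ∈ σ
    · by_cases haσ : a ∈ σ
      · exfalso
        apply hK
        rw [← hσim, image_contr_of_mem hbσ,
          Finset.insert_eq_self.mpr (Finset.mem_erase.mpr ⟨hne, haσ⟩)]
        exact K.down_closed σ hσK _ (Finset.erase_subset b σ)
          ⟨a, Finset.mem_erase.mpr ⟨hne, haσ⟩⟩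
      · have him : τ' = insert a (σ.erase b) := by rw [← hσim, image_contr_of_mem hbσ]
        have hback : insert b (τ'.erase a) = σ := by
          rw [him, Finset.erase_insert (fun h => haσ (Finset.mem_of_mem_erase h)),
            Finset.insert_erase hbσ]
        rw [hback]
        have hcards : σ.card = τ'.card := by
          rw [← hσim, card_image_contr hne (fun h => haσ h.1)]
        exact ⟨hσK, fun h => haσ h.1, hσim, hcards⟩
    · exfalso
      apply hK
      rw [← hσim, image_contr_of_not_mem hbσ]
      exact hσK

lemma liftT_of_mem_b (hne : a ≠ b) {K K' : SC V}
    (hK' : K'.faces = K.faces.image (Finset.image (contr a b)))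
    {τ' : Finset V} (hτ' : τ' ∈ K'.faces) (hb : b ∈ liftT K a b τ') :
    a ∈ τ' ∧ liftT K a b τ' = insert b (τ'.erase a) := by
  obtain ⟨-, -, him, -⟩ := liftT_spec hne hK' hτ'
  have ha : a ∈ τ' := by
    rw [← him]
    exact Finset.mem_image.mpr ⟨b, hb, contr_b a b⟩
  have hbτ' : b ∉ τ' := by
    rw [hK'] at hτ'
    obtain ⟨σ, hσ, rfl⟩ := Finset.mem_image.mp hτ'
    exact not_mem_image_contr hne σ
  by_cases hK : τ' ∈ K.faces
  · exfalso
    rw [liftT, if_pos hK] at hb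
    exact hbτ' hb
  · exact ⟨ha, by rw [liftT, if_neg hK]⟩

lemma liftE_spec (hne : a ≠ b) {K K' : SC V} {q : ℕ}
    (hK' : K'.faces = K.faces.image (Finset.image (contr a b)))
    {e : Finset V × Finset V} (he : IsGEdge K' q e) :
    IsGEdge K q (liftE K a b e) ∧ emap a b (liftE K a b e) = e
      ∧ ¬(a ∈ (liftE K a b e).1 ∧ b ∈ (liftE K a b e).1)
      ∧ ¬(a ∈ (liftE K a b e).2 ∧ b ∈ (liftE K a b e).2) := by
  obtain ⟨hT1, hT2, hT3, hT4⟩ := liftT_spec hne hK' he.2.1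
  set L := liftT K a b e.2 with hL
  set s := L.filter (fun x => contr a b x ∈ e.1) with hs
  have hLE : liftE K a b e = (s, L) := rfl
  rw [hLE]
  have hsub : s ⊆ L := Finset.filter_subset _ _
  have him1 : s.image (contr a b) = e.1 := by
    ext y
    constructor
    · intro hy
      obtain ⟨x, hx, rfl⟩ := Finset.mem_image.mp hy
      exact (Finset.mem_filter.mp hx).2
    · intro hy
      have hmem : y ∈ L.image (contr a b) := hT3 ▸ he.2.2.2.2 hy
      obtain ⟨x, hx, rfl⟩ := Finset.mem_image.mp hmem
      exact Finset.mem_image.mpr ⟨x, Finset.mem_filter.mpr ⟨hx, hy⟩, rfl⟩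
  have hnc1 : ¬(a ∈ s ∧ b ∈ s) := fun h => hT2 ⟨hsub h.1, hsub h.2⟩
  have hcard1 : s.card = e.1.card := by
    rw [← him1, card_image_contr hne hnc1]
  have h1K : s ∈ K.faces := by
    refine K.down_closed _ hT1 _ hsub ?_
    rw [← Finset.card_pos, hcard1, Finset.card_pos]
    exact K'.nonempty_of_mem e.1 he.1
  refine ⟨⟨h1K, hT1, ?_, ?_, hsub⟩, ?_, hnc1, fun h => hT2 h⟩
  · show s.card = q
    rw [hcard1, he.2.2.1]
  · show L.card = q + 1
    rw [hT4, he.2.2.2.1]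
  · show (s.image (contr a b), L.image (contr a b)) = e
    rw [him1, hT3]

lemma partner_spec (hne : a ≠ b) {σ : Finset V} (hnc : ¬(a ∈ σ ∧ b ∈ σ))
    (hor : a ∈ σ ∨ b ∈ σ) :
    (partner a b σ).image (contr a b) = σ.image (contr a b)
      ∧ partner a b σ ≠ σ
      ∧ ¬(a ∈ partner a b σ ∧ b ∈ partner a b σ)
      ∧ (a ∈ partner a b σ ∨ b ∈ partner a b σ)
      ∧ (partner a b σ).card = σ.card
      ∧ insert a (insert b (partner a b σ)) = insert a (insert b σ) := by
  by_cases hb : b ∈ σ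
  · have ha : a ∉ σ := fun h => hnc ⟨h, hb⟩
    have hpdef : partner a b σ = insert a (σ.erase b) := if_pos hb
    have hbP : b ∉ partner a b σ := by
      rw [hpdef]
      intro h
      rcases Finset.mem_insert.mp h with h1 | h1
      · exact hne h1.symm
      · exact Finset.notMem_erase b σ h1
    have haP : a ∈ partner a b σ := by rw [hpdef]; exact Finset.mem_insert_self a _
    refine ⟨?_, ?_, fun h => hbP h.2, Or.inl haP, ?_, ?_⟩
    · rw [image_contr_of_not_mem hbP, image_contr_of_mem hb, hpdef]
    · intro h
      rw [h] at hbP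
      exact hbP hb
    · rw [hpdef, Finset.card_insert_of_notMem
        (fun h => ha (Finset.mem_of_mem_erase h)), Finset.card_erase_of_mem hb]
      have := Finset.card_pos.mpr ⟨b, hb⟩
      omega
    · rw [hpdef]
      ext z
      simp only [Finset.mem_insert, Finset.mem_erase]
      constructor
      · rintro (rfl | rfl | (rfl | ⟨h1, h2⟩))
        · exact Or.inl rfl
        · exact Or.inr (Or.inl rfl)
        · exact Or.inl rfl
        · exact Or.inr (Or.inr h2)
      · rintro (rfl | rfl | h1)
        · exact Or.inl rfl
        · exact Or.inr (Or.inl rfl)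
        · by_cases hzb : z = b
          · exact Or.inr (Or.inl hzb)
          · exact Or.inr (Or.inr (Or.inr ⟨hzb, h1⟩))
  · have ha : a ∈ σ := hor.resolve_right hb
    have hpdef : partner a b σ = insert b (σ.erase a) := if_neg hb
    have hbP : b ∈ partner a b σ := by rw [hpdef]; exact Finset.mem_insert_self b _
    have haP : a ∉ partner a b σ := by
      rw [hpdef]
      intro h
      rcases Finset.mem_insert.mp h with h1 | h1
      · exact hne h1
      · exact Finset.notMem_erase a σ h1
    refine ⟨?_, ?_, fun h => haP h.1, Or.inr hbP, ?_, ?_⟩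
    · rw [image_contr_of_mem hbP, hpdef,
        Finset.erase_insert (fun h => hb (Finset.mem_of_mem_erase h)),
        Finset.insert_erase ha, image_contr_of_not_mem hb]
    · intro h
      rw [h] at hbP
      exact hb hbP
    · rw [hpdef, Finset.card_insert_of_notMem
        (fun h => hb (Finset.mem_of_mem_erase h)), Finset.card_erase_of_mem ha]
      have := Finset.card_pos.mpr ⟨a, ha⟩
      omega
    · rw [hpdef]
      ext z
      simp only [Finset.mem_insert, Finset.mem_erase]
      constructor
      · rintro (rfl | rfl | (rfl | ⟨h1, h2⟩))
        · exact Or.inl rfl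
        · exact Or.inr (Or.inl rfl)
        · exact Or.inr (Or.inl rfl)
        · exact Or.inr (Or.inr h2)
      · rintro (rfl | rfl | h1)
        · exact Or.inl rfl
        · exact Or.inr (Or.inl rfl)
        · by_cases hza : z = a
          · exact Or.inl hza
          · exact Or.inr (Or.inr (Or.inr ⟨hza, h1⟩))


lemma lift_exists (hne : a ≠ b) {K K' : SC V} (hab : ({a, b} : Finset V) ∈ K.faces)
    {p : ℕ} (hpl : PLink K a b (p : ℤ))
    (hK' : K'.faces = K.faces.image (Finset.image (contr a b)))
    {C' : Finset (Finset V × Finset V)} (hC' : IsCircuit K' (p + 1) C') :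
    ∃ C : Finset (Finset V × Finset V),
      (IsCircuit K (p + 1) C ∧ ¬ContainsMirrorHigh a b C ∧ ¬ContainsCollapsingLow a b C)
        ∧ fwd a b C = C' := by
  classical
  set ψ := liftE K a b with hψdef
  have hbK' : ∀ {τ' : Finset V}, τ' ∈ K'.faces → b ∉ τ' := by
    intro τ' h
    rw [hK'] at h
    obtain ⟨σ, -, rfl⟩ := Finset.mem_image.mp h
    exact not_mem_image_contr hne σ
  have hspec : ∀ e ∈ C', IsGEdge K (p + 1) (ψ e) ∧ emap a b (ψ e) = e
      ∧ ¬(a ∈ (ψ e).1 ∧ b ∈ (ψ e).1) ∧ ¬(a ∈ (ψ e).2 ∧ b ∈ (ψ e).2) :=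
    fun e he => liftE_spec hne hK' (hC'.1 e he)
  have hImg1 : ∀ e ∈ C', (ψ e).1.image (contr a b) = e.1 :=
    fun e he => congrArg Prod.fst ((hspec e he).2.1)
  have hImg2 : ∀ e ∈ C', (ψ e).2.image (contr a b) = e.2 :=
    fun e he => congrArg Prod.snd ((hspec e he).2.1)
  have hψinj : ∀ e ∈ C', ∀ d ∈ C', ψ e = ψ d → e = d := by
    intro e he d hd h
    rw [← (hspec e he).2.1, ← (hspec d hd).2.1, h]
  set B := C'.image ψ with hB
  have hd1B : ∀ σ : Finset V, (B.filter (fun d => d.1 = σ)).card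
      = (C'.filter (fun e => (ψ e).1 = σ)).card := by
    intro σ
    rw [hB, Finset.filter_image]
    exact Finset.card_image_of_injOn (fun e he' d hd' h =>
      hψinj e (Finset.mem_of_mem_filter e he') d (Finset.mem_of_mem_filter d hd') h)
  have hd2B : ∀ τ : Finset V, (B.filter (fun d => d.2 = τ)).card
      = (C'.filter (fun e => (ψ e).2 = τ)).card := by
    intro τ
    rw [hB, Finset.filter_image]
    exact Finset.card_image_of_injOn (fun e he' d hd' h =>
      hψinj e (Finset.mem_of_mem_filter e he') d (Finset.mem_of_mem_filter d hd') h)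
  set Odd1 := (B.image (fun d => d.1)).filter
      (fun σ => ¬ Even ((B.filter (fun d => d.1 = σ)).card)) with hOdd1def
  have hOddex : ∀ σ ∈ Odd1, ∃ e ∈ C', (ψ e).1 = σ := by
    intro σ hσ
    obtain ⟨hσB, hodd⟩ := Finset.mem_filter.mp hσ
    obtain ⟨d, hd, hd1⟩ := Finset.mem_image.mp hσB
    obtain ⟨e, he, rfl⟩ := Finset.mem_image.mp hd
    exact ⟨e, he, hd1⟩
  have hOddK : ∀ σ ∈ Odd1, σ ∈ K.faces ∧ ¬(a ∈ σ ∧ b ∈ σ) ∧ σ.card = p + 1 := by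
    intro σ hσ
    obtain ⟨e, he, hee⟩ := hOddex σ hσ
    have h1 := (hspec e he).1
    have h2 := (hspec e he).2.2.1
    exact ⟨hee ▸ h1.1, hee ▸ h2, hee ▸ h1.2.2.1⟩
  have hOddor : ∀ σ ∈ Odd1, a ∈ σ ∨ b ∈ σ := by
    intro σ hσ
    by_contra hcon
    push_neg at hcon
    obtain ⟨hσB, hodd⟩ := Finset.mem_filter.mp hσ
    apply hodd
    rw [hd1B σ]
    have hEqf : C'.filter (fun e => (ψ e).1 = σ) = C'.filter (fun e => e.1 = σ) := by
      ext e
      simp only [Finset.mem_filter, and_congr_right_iff]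
      intro he
      constructor
      · intro h
        rw [← hImg1 e he, h]
        exact image_contr_of_not_mem hcon.2
      · intro h
        rcases preimage_cases hne ((hspec e he).2.2.1)
          (show (ψ e).1.image (contr a b) = σ by rw [hImg1 e he, h]) with
          ⟨-, h1⟩ | ⟨-, -, haσ, -, -⟩
        · exact h1
        · exact absurd haσ hcon.1
    rw [hEqf]
    exact even_deg1 hC' σ
  have hpairing : ∀ σ : Finset V, ¬(a ∈ σ ∧ b ∈ σ) → (a ∈ σ ∨ b ∈ σ) →
      (C'.filter (fun e => (ψ e).1 = σ)).card
        + (C'.filter (fun e => (ψ e).1 = partner a b σ)).card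
      = (C'.filter (fun e => e.1 = σ.image (contr a b))).card := by
    intro σ hnc hor
    obtain ⟨hPim, hPne, hPnc, hPor, -, -⟩ := partner_spec hne hnc hor
    have hdisj : Disjoint (C'.filter (fun e => (ψ e).1 = σ))
        (C'.filter (fun e => (ψ e).1 = partner a b σ)) := by
      rw [Finset.disjoint_left]
      intro e h1 h2
      exact hPne ((Finset.mem_filter.mp h2).2.symm.trans (Finset.mem_filter.mp h1).2)
    have hunion : C'.filter (fun e => e.1 = σ.image (contr a b))
        = C'.filter (fun e => (ψ e).1 = σ)
          ∪ C'.filter (fun e => (ψ e).1 = partner a b σ) := by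
      ext e
      simp only [Finset.mem_filter, Finset.mem_union]
      constructor
      · rintro ⟨he, h1⟩
        have hsame : (ψ e).1.image (contr a b) = σ.image (contr a b) := by
          rw [hImg1 e he, h1]
        rcases same_image_cases hne ((hspec e he).2.2.1) hnc hsame with h | h | h
        · exact Or.inl ⟨he, h⟩
        · refine Or.inr ⟨he, ?_⟩
          rw [partner, if_pos h.2.1]
          exact h.2.2
        · refine Or.inr ⟨he, ?_⟩
          have hbσ : b ∉ σ := fun hb => hnc ⟨h.1, hb⟩
          rw [partner, if_neg hbσ]
          have hanotin : a ∉ (ψ e).1.erase b :=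
            fun hmem => ((hspec e he).2.2.1) ⟨Finset.mem_of_mem_erase hmem, h.2.1⟩
          rw [h.2.2, Finset.erase_insert hanotin, Finset.insert_erase h.2.1]
      · rintro (⟨he, h1⟩ | ⟨he, h1⟩)
        · exact ⟨he, by rw [← hImg1 e he, h1]⟩
        · exact ⟨he, by rw [← hImg1 e he, h1, hPim]⟩
    rw [hunion, Finset.card_union_of_disjoint hdisj]
  have hOddpartner : ∀ σ ∈ Odd1, partner a b σ ∈ Odd1 := by
    intro σ hσ
    obtain ⟨hσB, hodd⟩ := Finset.mem_filter.mp hσ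
    obtain ⟨hσK, hnc, hcard⟩ := hOddK σ hσ
    have hor := hOddor σ hσ
    have hpair := hpairing σ hnc hor
    have hEv : Even ((C'.filter (fun e => e.1 = σ.image (contr a b))).card) :=
      even_deg1 hC' _
    have hodd' : ¬ Even ((C'.filter (fun e => (ψ e).1 = σ)).card) := by
      rw [← hd1B σ]
      exact hodd
    have hoddP : ¬ Even ((C'.filter (fun e => (ψ e).1 = partner a b σ)).card) := by
      rw [Nat.even_iff] at hEv ⊢
      rw [Nat.even_iff] at hodd'
      omega
    have hpos : 0 < (C'.filter (fun e => (ψ e).1 = partner a b σ)).card := by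
      rcases Nat.eq_zero_or_pos ((C'.filter (fun e => (ψ e).1 = partner a b σ)).card)
        with h | h
      · rw [h] at hoddP
        exact absurd Even.zero hoddP
      · exact h
    obtain ⟨e, hef⟩ := Finset.card_pos.mp hpos
    obtain ⟨he, he1⟩ := Finset.mem_filter.mp hef
    refine Finset.mem_filter.mpr ⟨?_, ?_⟩
    · exact Finset.mem_image.mpr ⟨ψ e, Finset.mem_image_of_mem ψ he, he1⟩
    · rw [hd1B]
      exact hoddP
  have hOddτ : ∀ σ ∈ Odd1, insert a (insert b σ) ∈ K.faces := by
    intro σ hσ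
    obtain ⟨hσK, hnc, hcard⟩ := hOddK σ hσ
    have hor := hOddor σ hσ
    have hPK : partner a b σ ∈ K.faces := (hOddK _ (hOddpartner σ hσ)).1
    by_cases hb : b ∈ σ
    · have ha : a ∉ σ := fun h => hnc ⟨h, hb⟩
      have h1 : insert a (σ.erase b) = partner a b σ := (if_pos hb).symm
      have h2 : insert b (σ.erase b) = σ := Finset.insert_erase hb
      have hcards : (σ.erase b).card = p := by
        rw [Finset.card_erase_of_mem hb, hcard]
        omega
      have hres := link_insert hne hab hpl hcards
        (fun h => ha (Finset.mem_of_mem_erase h)) (Finset.notMem_erase b σ)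
        (by rw [h1]; exact hPK) (by rw [h2]; exact hσK)
      rw [h2] at hres
      rw [Finset.insert_eq_self.mpr hb]
      exact hres
    · have ha : a ∈ σ := hor.resolve_right hb
      have h1 : insert b (σ.erase a) = partner a b σ := (if_neg hb).symm
      have h2 : insert a (σ.erase a) = σ := Finset.insert_erase ha
      have hcards : (σ.erase a).card = p := by
        rw [Finset.card_erase_of_mem ha, hcard]
        omega
      have hres := link_insert hne hab hpl hcards (Finset.notMem_erase a σ)
        (fun h => hb (Finset.mem_of_mem_erase h)) (by rw [h2]; exact hσK)
        (by rw [h1]; exact hPK)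
      have heq : insert a (insert b (σ.erase a)) = insert a (insert b σ) := by
        ext z
        simp only [Finset.mem_insert, Finset.mem_erase]
        constructor
        · rintro (rfl | rfl | ⟨h1', h2'⟩)
          · exact Or.inl rfl
          · exact Or.inr (Or.inl rfl)
          · exact Or.inr (Or.inr h2')
        · rintro (rfl | rfl | h1')
          · exact Or.inl rfl
          · exact Or.inr (Or.inl rfl)
          · by_cases hza : z = a
            · exact Or.inl hza
            · exact Or.inr (Or.inr ⟨hza, h1'⟩)
      rw [← heq]
      exact hres
  set Corr := Odd1.image (fun σ => (σ, insert a (insert b σ))) with hCorrdef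
  have hCorrmem : ∀ x ∈ Corr, x.1 ∈ Odd1 ∧ x.2 = insert a (insert b x.1) := by
    intro x hx
    obtain ⟨σ, hσ, rfl⟩ := Finset.mem_image.mp hx
    exact ⟨hσ, rfl⟩
  have hcard2 : ∀ σ ∈ Odd1, (insert a (insert b σ)).card = p + 2 := by
    intro σ hσ
    obtain ⟨-, hnc, hcard⟩ := hOddK σ hσ
    rcases hOddor σ hσ with ha | hb
    · have hb' : b ∉ σ := fun h => hnc ⟨ha, h⟩
      rw [Finset.insert_eq_self.mpr (Finset.mem_insert_of_mem ha),
        Finset.card_insert_of_notMem hb', hcard]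
    · have ha' : a ∉ σ := fun h => hnc ⟨h, hb⟩
      rw [Finset.insert_eq_self.mpr hb, Finset.card_insert_of_notMem ha', hcard]
  set D := B ∪ Corr with hDdef
  have hdisjBC : Disjoint B Corr := by
    rw [Finset.disjoint_left]
    intro x hxB hxC
    obtain ⟨hx1, hx2⟩ := hCorrmem x hxC
    obtain ⟨e, he, rfl⟩ := Finset.mem_image.mp hxB
    apply (hspec e he).2.2.2
    rw [hx2]
    exact ⟨Finset.mem_insert_self a _,
      Finset.mem_insert_of_mem (Finset.mem_insert_self b _)⟩
  have hDedge : ∀ x ∈ D, IsGEdge K (p + 1) x := by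
    intro x hx
    rcases Finset.mem_union.mp hx with hx | hx
    · obtain ⟨e, he, rfl⟩ := Finset.mem_image.mp hx
      exact (hspec e he).1
    · obtain ⟨σ, hσ, rfl⟩ := Finset.mem_image.mp hx
      obtain ⟨hσK, hnc, hcard⟩ := hOddK σ hσ
      refine ⟨hσK, hOddτ σ hσ, hcard, hcard2 σ hσ, ?_⟩
      intro z hz
      exact Finset.mem_insert_of_mem (Finset.mem_insert_of_mem hz)
  have hdeg : ∀ ρ : Finset V, Even ((D.filter (fun d => d.1 = ρ)).card
      + (D.filter (fun d => d.2 = ρ)).card) := by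
    intro ρ
    have hsplit1 : (D.filter (fun d => d.1 = ρ)).card
        = (B.filter (fun d => d.1 = ρ)).card + (Corr.filter (fun d => d.1 = ρ)).card := by
      rw [hDdef, Finset.filter_union,
        Finset.card_union_of_disjoint (Finset.disjoint_filter_filter hdisjBC)]
    have hsplit2 : (D.filter (fun d => d.2 = ρ)).card
        = (B.filter (fun d => d.2 = ρ)).card + (Corr.filter (fun d => d.2 = ρ)).card := by
      rw [hDdef, Finset.filter_union,
        Finset.card_union_of_disjoint (Finset.disjoint_filter_filter hdisjBC)]
    have hCorr1 : (Corr.filter (fun d => d.1 = ρ)).card = if ρ ∈ Odd1 then 1 else 0 := by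
      by_cases hρO : ρ ∈ Odd1
      · rw [if_pos hρO, Finset.card_eq_one]
        refine ⟨(ρ, insert a (insert b ρ)), ?_⟩
        ext x
        simp only [Finset.mem_filter, Finset.mem_singleton]
        constructor
        · rintro ⟨hx, hx1⟩
          obtain ⟨hxO, hx2⟩ := hCorrmem x hx
          exact Prod.ext hx1 (by rw [hx2, hx1])
        · rintro rfl
          exact ⟨Finset.mem_image_of_mem _ hρO, rfl⟩
      · rw [if_neg hρO, Finset.card_eq_zero, Finset.filter_eq_empty_iff]
        intro x hx h1
        obtain ⟨hxO, -⟩ := hCorrmem x hx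
        exact hρO (h1 ▸ hxO)
    have hB2even : Even ((B.filter (fun d => d.2 = ρ)).card) := by
      rw [hd2B ρ]
      have hmt : ∀ e ∈ C'.filter (fun e => (ψ e).2 = ρ),
          e.2 ∈ (C'.filter (fun e => (ψ e).2 = ρ)).image (fun e => e.2) :=
        fun e he => Finset.mem_image_of_mem _ he
      rw [Finset.card_eq_sum_card_fiberwise hmt]
      refine even_sum_nat _ _ ?_
      intro τ' hτ'
      obtain ⟨e₀, he₀, he₀τ⟩ := Finset.mem_image.mp hτ'
      obtain ⟨he₀C, he₀ψ⟩ := Finset.mem_filter.mp he₀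
      have hfib : (C'.filter (fun e => (ψ e).2 = ρ)).filter (fun e => e.2 = τ')
          = C'.filter (fun e => e.2 = τ') := by
        ext e
        simp only [Finset.mem_filter]
        constructor
        · rintro ⟨⟨h1, h2⟩, h3⟩
          exact ⟨h1, h3⟩
        · rintro ⟨h1, h2⟩
          refine ⟨⟨h1, ?_⟩, h2⟩
          have heq2 : (ψ e).2 = (ψ e₀).2 := by
            show liftT K a b e.2 = liftT K a b e₀.2
            rw [h2, he₀τ]
          rw [heq2]
          exact he₀ψ
      rw [hfib]
      exact even_deg2 hC' τ'
    have hC2even : Even ((Corr.filter (fun d => d.2 = ρ)).card) := by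
      have hC2set : Corr.filter (fun d => d.2 = ρ)
          = (Odd1.filter (fun σ => insert a (insert b σ) = ρ)).image
              (fun σ => (σ, insert a (insert b σ))) := by
        ext x
        simp only [Finset.mem_filter, Finset.mem_image]
        constructor
        · rintro ⟨hx, hx2⟩
          obtain ⟨σ, hσ, rfl⟩ := Finset.mem_image.mp hx
          exact ⟨σ, ⟨hσ, hx2⟩, rfl⟩
        · rintro ⟨σ, ⟨hσO, hσρ⟩, rfl⟩
          exact ⟨Finset.mem_image_of_mem _ hσO, hσρ⟩
      rw [hC2set, Finset.card_image_of_injOn (fun x hx y hy h => congrArg Prod.fst h)]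
      by_cases hex : ∃ σ₁ ∈ Odd1, insert a (insert b σ₁) = ρ
      · obtain ⟨σ₀, hσ₀, hρ₀⟩ := hex
        obtain ⟨-, hnc₀, -⟩ := hOddK σ₀ hσ₀
        have hor₀ := hOddor σ₀ hσ₀
        obtain ⟨-, hPne₀, -, -, -, hPτ₀⟩ := partner_spec hne hnc₀ hor₀
        have hPmem : partner a b σ₀ ∈ Odd1.filter (fun σ => insert a (insert b σ) = ρ) :=
          Finset.mem_filter.mpr ⟨hOddpartner σ₀ hσ₀, hPτ₀.trans hρ₀⟩
        have hσmem : σ₀ ∈ Odd1.filter (fun σ => insert a (insert b σ) = ρ) :=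
          Finset.mem_filter.mpr ⟨hσ₀, hρ₀⟩
        have hval : ∀ σ ∈ Odd1.filter (fun σ => insert a (insert b σ) = ρ),
            σ = ρ.erase b ∨ σ = ρ.erase a := by
          intro σ hσf
          obtain ⟨hσO, hσρ⟩ := Finset.mem_filter.mp hσf
          obtain ⟨-, hnc, -⟩ := hOddK σ hσO
          rcases hOddor σ hσO with ha | hb
          · left
            have hb' : b ∉ σ := fun h => hnc ⟨ha, h⟩
            rw [← hσρ, Finset.insert_eq_self.mpr (Finset.mem_insert_of_mem ha),
              Finset.erase_insert hb']
          · right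
            have ha' : a ∉ σ := fun h => hnc ⟨h, hb⟩
            rw [← hσρ, Finset.insert_eq_self.mpr hb, Finset.erase_insert ha']
        have hsub2 : Odd1.filter (fun σ => insert a (insert b σ) = ρ)
            ⊆ {σ₀, partner a b σ₀} := by
          intro σ hσf
          rcases hval σ hσf with h1 | h1 <;> rcases hval σ₀ hσmem with h2 | h2 <;>
            rcases hval (partner a b σ₀) hPmem with h3 | h3
          · exact Finset.mem_insert.mpr (Or.inl (h1.trans h2.symm))
          · exact Finset.mem_insert.mpr (Or.inl (h1.trans h2.symm))
          · exact Finset.mem_insert.mpr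
              (Or.inr (Finset.mem_singleton.mpr (h1.trans h3.symm)))
          · exact absurd (h3.trans h2.symm) hPne₀
          · exact absurd (h3.trans h2.symm) hPne₀
          · exact Finset.mem_insert.mpr
              (Or.inr (Finset.mem_singleton.mpr (h1.trans h3.symm)))
          · exact Finset.mem_insert.mpr (Or.inl (h1.trans h2.symm))
          · exact Finset.mem_insert.mpr (Or.inl (h1.trans h2.symm))
        have hsup2 : ({σ₀, partner a b σ₀} : Finset (Finset V))
            ⊆ Odd1.filter (fun σ => insert a (insert b σ) = ρ) := by
          intro x hx
          rcases Finset.mem_insert.mp hx with rfl | hx'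
          · exact hσmem
          · rw [Finset.mem_singleton.mp hx']
            exact hPmem
        have hni2 : σ₀ ∉ ({partner a b σ₀} : Finset (Finset V)) := by
          simp only [Finset.mem_singleton]
          exact fun h => hPne₀ h.symm
        rw [Finset.Subset.antisymm hsub2 hsup2,
          Finset.card_insert_of_notMem hni2, Finset.card_singleton]
        exact ⟨1, rfl⟩
      · have hemp : Odd1.filter (fun σ => insert a (insert b σ) = ρ) = ∅ :=
          Finset.filter_eq_empty_iff.mpr (fun σ hσ h => hex ⟨σ, hσ, h⟩)
        rw [hemp]
        simp
    rw [hsplit1, hsplit2, hCorr1]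
    by_cases hρO : ρ ∈ Odd1
    · rw [if_pos hρO]
      have hodd := (Finset.mem_filter.mp hρO).2
      rw [Nat.even_iff] at hB2even hC2even ⊢
      have hodd' : (B.filter (fun d => d.1 = ρ)).card % 2 = 1 := by
        rw [Nat.even_iff] at hodd
        omega
      omega
    · rw [if_neg hρO]
      have hBeven : Even ((B.filter (fun d => d.1 = ρ)).card) := by
        by_cases hmemI : ρ ∈ B.image (fun d => d.1)
        · by_contra hodd
          exact hρO (Finset.mem_filter.mpr ⟨hmemI, hodd⟩)
        · have hempB : B.filter (fun d => d.1 = ρ) = ∅ :=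
            Finset.filter_eq_empty_iff.mpr
              (fun d hd h => hmemI (Finset.mem_image.mpr ⟨d, hd, h⟩))
          rw [hempB]
          simp
      rw [Nat.even_iff] at hB2even hC2even hBeven ⊢
      omega
  have hnoL : ¬ContainsCollapsingLow a b D := by
    rintro ⟨x, hx, hxcoll⟩
    rcases Finset.mem_union.mp hx with hx' | hx'
    · obtain ⟨e, he, rfl⟩ := Finset.mem_image.mp hx'
      exact (hspec e he).2.2.1 hxcoll
    · obtain ⟨σ, hσ, rfl⟩ := Finset.mem_image.mp hx'
      exact (hOddK σ hσ).2.1 hxcoll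
  have hnoM : ¬ContainsMirrorHigh a b D := by
    rintro ⟨x, hx, y, hy, hax, hby, hxy⟩
    rcases Finset.mem_union.mp hy with hyB | hyC
    · obtain ⟨ey, hey, rfl⟩ := Finset.mem_image.mp hyB
      have hby' : b ∈ liftT K a b ey.2 := hby
      obtain ⟨hayτ, hLdef⟩ := liftT_of_mem_b hne hK' (hC'.1 ey hey).2.1 hby'
      have hbey : b ∉ ey.2 := hbK' (hC'.1 ey hey).2.1
      have hyτ : (ψ ey).2 = insert b (ey.2.erase a) := hLdef
      have hx2 : x.2 = ey.2 := by
        rw [hxy, hyτ, Finset.erase_insert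
          (fun h => hbey (Finset.mem_of_mem_erase h)), Finset.insert_erase hayτ]
      have hbx : b ∉ x.2 := by
        rw [hx2]
        exact hbey
      rcases Finset.mem_union.mp hx with hxB | hxC
      · obtain ⟨ex, hex, rfl⟩ := Finset.mem_image.mp hxB
        have hexey : ex.2 = ey.2 := by
          rw [← hImg2 ex hex, hx2, image_contr_of_not_mem hbey]
        have hcontr : (ψ ex).2 = (ψ ey).2 := by
          show liftT K a b ex.2 = liftT K a b ey.2
          rw [hexey]
        rw [hcontr] at hbx
        exact hbx hby
      · obtain ⟨σ, hσ, rfl⟩ := Finset.mem_image.mp hxC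
        exact hbx (Finset.mem_insert_of_mem (Finset.mem_insert_self b σ))
    · obtain ⟨σ, hσ, rfl⟩ := Finset.mem_image.mp hyC
      have hbmem : b ∈ insert a (insert b σ) :=
        Finset.mem_insert_of_mem (Finset.mem_insert_self b σ)
      have hamem : a ∈ (insert a (insert b σ)).erase b :=
        Finset.mem_erase.mpr ⟨hne, Finset.mem_insert_self a _⟩
      have hc1 : x.2.card = ((insert a (insert b σ)).erase b).card := by
        rw [hxy, Finset.insert_eq_self.mpr hamem]
      have hcy : (insert a (insert b σ)).card = p + 2 := hcard2 σ hσ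
      have hcx : x.2.card = p + 1 + 1 := (hDedge x hx).2.2.2.1
      rw [Finset.card_erase_of_mem hbmem] at hc1
      omega
  have hfwdD : fwd a b D = C' := by
    have hDF : D.filter (fun e => ¬(a ∈ e.2 ∧ b ∈ e.2)) = B := by
      ext x
      simp only [Finset.mem_filter, hDdef, Finset.mem_union]
      constructor
      · rintro ⟨hx | hx, hnc⟩
        · exact hx
        · exfalso
          obtain ⟨σ, hσ, rfl⟩ := Finset.mem_image.mp hx
          exact hnc ⟨Finset.mem_insert_self a _,
            Finset.mem_insert_of_mem (Finset.mem_insert_self b σ)⟩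
      · intro hx
        have hx' := hx
        obtain ⟨e, he, rfl⟩ := Finset.mem_image.mp hx'
        exact ⟨Or.inl hx, (hspec e he).2.2.2⟩
    rw [fwd, hDF, hB, Finset.image_image]
    have hcongr : ∀ e ∈ C', (emap a b ∘ ψ) e = e := fun e he => (hspec e he).2.1
    rw [Finset.image_congr hcongr, Finset.image_id']
  exact ⟨D, ⟨⟨hDedge, hdeg⟩, hnoM, hnoL⟩, hfwdD⟩

end Aux14








/-- if `ab` satisfies the `p`-link condition, there is a surjective,
b-parity-preserving, chord-preserving map from the circuits of `G_{p+1}(K)` containing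
no collapsing `p`-vertex and no mirror pair of `(p+1)`-vertices, onto the circuits
of `G_{p+1}(K')`. -/
theorem statement14 (K K' : SC V) (o o' : Finset V → ℤ)
    (ho : IsOrientation K o) (ho' : IsOrientation K' o')
    (a b : V) (hne : a ≠ b) (hab : ({a, b} : Finset V) ∈ K.faces)
    (p : ℕ) (hpl : PLink K a b (p : ℤ))
    (hK' : K'.faces = K.faces.image (Finset.image (contr a b))) :
    ∃ f : {C : Finset (Finset V × Finset V) // IsCircuit K (p + 1) C ∧
            ¬ContainsMirrorHigh a b C ∧ ¬ContainsCollapsingLow a b C} →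
        {C' : Finset (Finset V × Finset V) // IsCircuit K' (p + 1) C'},
      Function.Surjective f ∧
      (∀ C, (BEven o C.1 ↔ BEven o' (f C).1) ∧ (BOdd o C.1 ↔ BOdd o' (f C).1)) ∧
      (∀ C, HasChord K (p + 1) C.1 → HasChord K' (p + 1) (f C).1) := by
  refine ⟨fun C => ⟨fwd a b C.1, fwd_isCircuit hne hK' C.2.1 C.2.2.1 C.2.2.2⟩, ?_, ?_, ?_⟩
  · intro C'
    obtain ⟨C, hprops, hfwd⟩ := lift_exists hne hab hpl hK' C'.2
    exact ⟨⟨C, hprops⟩, Subtype.ext hfwd⟩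
  · intro C
    have hpar := fwd_parity hne ho ho' hK' C.2.1 C.2.2.1 C.2.2.2
    show (BEven o C.1 ↔ BEven o' (fwd a b C.1)) ∧ (BOdd o C.1 ↔ BOdd o' (fwd a b C.1))
    unfold BEven BOdd
    constructor <;> constructor <;> intro h <;> omega
  · intro C hch
    show HasChord K' (p + 1) (fwd a b C.1)
    exact fwd_chord hne hK' C.2.1 C.2.2.1 C.2.2.2 hch

end ECpaper
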